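/- arXiv:1509.02117 — 5 statements merged into one kernel-verified Lean document; each statement's English description precedes it below -/
import Mathlib

section
/- For every (n,r)-matroid M, the support of M is an order filter in the dominance order on (n,r)-sequences: if g_r(M) > 0 and s ⊵ r, then g_s(M) > 0. -/
open MvPolynomial
open scoped Classical

/-- The dominance order on bit sequences: `Dominates s t` means `s ⊵ t`, i.e. every
prefix of `s` has at least as many `1`s (`true`s) as the corresponding prefix of `t`. -/
def Dominates (s t : List Bool) : Prop :=
  ∀ j : ℕ, (t.take j).count true ≤ (s.take j).count true

/-- The indicator bit sequence of a subset `B` of `{1,…,n}` (modelled as `Fin n`). -/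
def indList {n : ℕ} (B : Finset (Fin n)) : List Bool :=
  List.ofFn fun i : Fin n => decide (i ∈ B)

/-- The finset of `(n,r)`-sequences: bit sequences of length `n` with exactly `r` ones. -/
def seqs (n r : ℕ) : Finset (List Bool) :=
  ((Finset.univ : Finset (Fin n → Bool)).image List.ofFn).filter fun l => l.count true = r

/-- The Tutte polynomial determined by a rank function `rk` on subsets of an `n`-element
ground set, where `r` is the rank of the whole ground set.  The variable `X 0` plays the
role of `x` and `X 1` plays the role of `y`. -/
noncomputable def tutte (K : Type*) [Field K] {n : ℕ} (r : ℕ) (rk : Finset (Fin n) → ℕ) :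
    MvPolynomial (Fin 2) K :=
  ∑ A : Finset (Fin n), (X 0 - 1) ^ (r - rk A) * (X 1 - 1) ^ (A.card - rk A)

/-- `B` is a basis of the freedom matroid `F(s)`: it has `wt s` elements and its
indicator sequence is dominated by `s`. -/
def IsFreedomBasis (s : List Bool) (B : Finset (Fin s.length)) : Prop :=
  B.card = s.count true ∧ Dominates s (indList B)

/-- The rank function of the freedom matroid `F(s)`: the rank of a set is the largest
size of its intersection with a basis. -/
noncomputable def freedomRk (s : List Bool) (A : Finset (Fin s.length)) : ℕ :=
  (Finset.univ.filter fun B => IsFreedomBasis s B).sup fun B => (A ∩ B).card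

/-- The Tutte polynomial of the freedom matroid `F(s)`. -/
noncomputable def freedomTutte (K : Type*) [Field K] (s : List Bool) :
    MvPolynomial (Fin 2) K :=
  tutte K (s.count true) (freedomRk s)

/-- The rank of a set in a matroid: the largest cardinality of an independent subset. -/
noncomputable def mrank {n : ℕ} (M : Matroid (Fin n)) (A : Set (Fin n)) : ℕ :=
  (Finset.univ.filter fun I : Finset (Fin n) =>
    M.Indep ↑I ∧ (↑I : Set (Fin n)) ⊆ A).sup Finset.card

/-- The set `{π(1),…,π(m)}` of the first `m` values of a permutation. -/
def prefFinset {n : ℕ} (π : Equiv.Perm (Fin n)) (m : ℕ) : Finset (Fin n) :=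
  (Finset.univ.filter fun i : Fin n => (i : ℕ) < m).image π

/-- The rank sequence of a permutation `π` with respect to a rank function `rk`:
its `j`-th entry is `1` (`true`) exactly when `rk {π(1),…,π(j)} = rk {π(1),…,π(j-1)} + 1`. -/
def rankSeq {n : ℕ} (rk : Finset (Fin n) → ℕ) (π : Equiv.Perm (Fin n)) : List Bool :=
  List.ofFn fun j : Fin n =>
    decide (rk (prefFinset π ((j : ℕ) + 1)) = rk (prefFinset π (j : ℕ)) + 1)

/-- `gCoeff rk l` is the number of permutations of the ground set whose rank sequence
is the bit sequence `l`; these are the coefficients of the `G`-invariant. -/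
noncomputable def gCoeff {n : ℕ} (rk : Finset (Fin n) → ℕ) (l : List Bool) : ℕ :=
  (Finset.univ.filter fun π : Equiv.Perm (Fin n) => rankSeq rk π = l).card

/-- The `G`-invariant, as an element of the free `K`-module on all bit sequences. -/
noncomputable def Ginv (K : Type*) [Field K] {n : ℕ} (rk : Finset (Fin n) → ℕ) :
    List Bool →₀ K :=
  ∑ π : Equiv.Perm (Fin n), Finsupp.single (rankSeq rk π) 1

/-- The value of the specialization `Sp` on the symbol `[l]`. -/
noncomputable def spPoly (K : Type*) [Field K] (l : List Bool) : MvPolynomial (Fin 2) K :=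
  ∑ m ∈ Finset.range (l.length + 1),
    ((m.factorial * (l.length - m).factorial : ℕ) : K)⁻¹ •
      ((X 0 - 1) ^ (l.count true - (l.take m).count true) *
        (X 1 - 1) ^ (m - (l.take m).count true))

/-- The specialization `Sp` as a linear map on the free module on bit-sequence symbols. -/
noncomputable def SpMap (K : Type*) [Field K] :
    (List Bool →₀ K) →ₗ[K] MvPolynomial (Fin 2) K :=
  Finsupp.linearCombination K (spPoly K)

/-- `G(n,r)`: the span of the `(n,r)`-sequence symbols, a subspace of dimension
`binomial(n,r)` of the free module on all bit sequences. -/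
noncomputable def Gspace (K : Type*) [Field K] (n r : ℕ) : Submodule K (List Bool →₀ K) :=
  Submodule.span K ((fun l => Finsupp.single l (1 : K)) '' ↑(seqs n r))

/-- `T(n,r)`: the span of the Tutte polynomials of all `(n,r)`-matroids. -/
noncomputable def Tspace (K : Type*) [Field K] (n r : ℕ) :
    Submodule K (MvPolynomial (Fin 2) K) :=
  Submodule.span K {p | ∃ M : Matroid (Fin n), M.E = Set.univ ∧ mrank M Set.univ = r ∧
    p = tutte K r fun A : Finset (Fin n) => mrank M ↑A}

/-- The bit sequence `0^a 1^b 0^c 1^d` associated to a quadruple `(a,b,c,d)`;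
such sequences are the join-irreducible ones. -/
def joinList (q : ℕ × ℕ × ℕ × ℕ) : List Bool :=
  List.replicate q.1 false ++ List.replicate q.2.1 true ++
    List.replicate q.2.2.1 false ++ List.replicate q.2.2.2 true

/-- The bit sequence `1^a 0^b 1^c 0^d` associated to a quadruple `(a,b,c,d)`;
such sequences are the meet-irreducible ones. -/
def meetList (q : ℕ × ℕ × ℕ × ℕ) : List Bool :=
  List.replicate q.1 true ++ List.replicate q.2.1 false ++
    List.replicate q.2.2.1 true ++ List.replicate q.2.2.2 false

/-- Quadruples `(a,b,c,d)` with `a+b+c+d = n` and `b+d = r`, indexing the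
join-irreducible `(n,r)`-sequences `0^a 1^b 0^c 1^d`. -/
def joinIdx (n r : ℕ) : Type :=
  {q : ℕ × ℕ × ℕ × ℕ // q.1 + q.2.1 + q.2.2.1 + q.2.2.2 = n ∧ q.2.1 + q.2.2.2 = r}

/-- Quadruples `(a,b,c,d)` with `a+b+c+d = n` and `a+c = r`, indexing the
meet-irreducible `(n,r)`-sequences `1^a 0^b 1^c 0^d`. -/
def meetIdx (n r : ℕ) : Type :=
  {q : ℕ × ℕ × ℕ × ℕ // q.1 + q.2.1 + q.2.2.1 + q.2.2.2 = n ∧ q.1 + q.2.2.1 = r}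

/-- `f(u) = T(F(u); 1, y)`. -/
noncomputable def fEval (K : Type*) [Field K] (u : List Bool) : MvPolynomial (Fin 2) K :=
  MvPolynomial.aeval (fun i : Fin 2 => if i = 0 then 1 else X 1) (freedomTutte K u)

/-- `g(u) = T(F(u); x, 1)`. -/
noncomputable def gEval (K : Type*) [Field K] (u : List Bool) : MvPolynomial (Fin 2) K :=
  MvPolynomial.aeval (fun i : Fin 2 => if i = 0 then X 0 else 1) (freedomTutte K u)

/-- `τ(u) = T(F(u); 1, 1)`. -/
noncomputable def tauEval (K : Type*) [Field K] (u : List Bool) : MvPolynomial (Fin 2) K :=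
  MvPolynomial.aeval (fun _ : Fin 2 => (1 : MvPolynomial (Fin 2) K)) (freedomTutte K u)

/-!
If positions `p` and `p + 1` of the rank sequence of `π` read `0 1`, exchanging `π(p)` and
`π(p + 1)` turns them into `1 0` and changes no other entry: by submodularity, an element that
raises the rank of `X ∪ {x}` also raises the rank of `X`. On the other hand, if `s ⊵ u` are
distinct sequences of the same length and weight, `u` contains a `0 1` whose replacement by `1 0`
is still dominated by `s`. Each replacement raises `∑ₘ (number of ones among the first m bits)`
by one, so finitely many of them lead from `t` to `s`.
-/

def prefixCount (u : List Bool) (m : ℕ) : ℕ := (u.take m).count true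

lemma prefixCount_zero (u : List Bool) : prefixCount u 0 = 0 := by
  simp [prefixCount]

lemma prefixCount_succ (u : List Bool) (m : ℕ) :
    prefixCount u (m + 1) = prefixCount u m + if u[m]? = some true then 1 else 0 := by
  rw [prefixCount, prefixCount, List.take_add_one, List.count_append]
  rcases u[m]? with _ | _ | _ <;> simp

lemma prefixCount_of_length_le {u : List Bool} {m : ℕ} (h : u.length ≤ m) :
    prefixCount u m = u.count true := by
  rw [prefixCount, List.take_of_length_le h]

lemma prefixCount_mono (u : List Bool) : Monotone (prefixCount u) :=
  monotone_nat_of_le_succ fun m => by rw [prefixCount_succ]; omega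

lemma prefixCount_eq_of_forall_ne_true {u : List Bool} {a b : ℕ} (hab : a ≤ b)
    (h : ∀ i, a ≤ i → i < b → u[i]? ≠ some true) : prefixCount u b = prefixCount u a := by
  induction b, hab using Nat.le_induction with
  | base => rfl
  | succ b hab ih =>
    rw [prefixCount_succ, if_neg (h b hab b.lt_succ_self),
      ih fun i hai hib => h i hai (hib.trans b.lt_succ_self), add_zero]

lemma eq_of_prefixCount_eq {u v : List Bool} (hl : u.length = v.length)
    (h : ∀ m, prefixCount u m = prefixCount v m) : u = v := by
  refine List.ext_getElem? fun i => ?_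
  have hi := prefixCount_succ u i
  rw [h, h, prefixCount_succ, add_right_inj] at hi
  rcases lt_or_ge i u.length with hlt | hge
  · rw [List.getElem?_eq_getElem hlt, List.getElem?_eq_getElem (hl ▸ hlt)] at hi ⊢
    revert hi
    cases u[i] <;> cases v[i] <;> simp
  · rw [List.getElem?_eq_none hge, List.getElem?_eq_none (hl ▸ hge)]

lemma dominates_iff (s u : List Bool) : Dominates s u ↔ ∀ m, prefixCount u m ≤ prefixCount s m :=
  Iff.rfl

def shiftOneLeft (u : List Bool) (p : ℕ) : List Bool := (u.set p true).set (p + 1) false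

lemma length_shiftOneLeft (u : List Bool) (p : ℕ) : (shiftOneLeft u p).length = u.length := by
  simp [shiftOneLeft]

lemma getElem?_shiftOneLeft {u : List Bool} {p : ℕ} (hp : p + 1 < u.length) (i : ℕ) :
    (shiftOneLeft u p)[i]? =
      if i = p then some true else if i = p + 1 then some false else u[i]? := by
  simp only [shiftOneLeft, List.getElem?_set, List.length_set]
  split_ifs <;> first | omega | rfl

lemma prefixCount_shiftOneLeft {u : List Bool} {p : ℕ} (h0 : u[p]? = some false)
    (h1 : u[p + 1]? = some true) (m : ℕ) :
    prefixCount (shiftOneLeft u p) m = prefixCount u m + if m = p + 1 then 1 else 0 := by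
  have hp : p + 1 < u.length := (List.getElem?_eq_some_iff.1 h1).1
  induction m with
  | zero => simp [prefixCount_zero]
  | succ m ih =>
    rw [prefixCount_succ, prefixCount_succ, ih, getElem?_shiftOneLeft hp]
    rcases eq_or_ne m p with rfl | hmp
    · simp [h0]
    rcases eq_or_ne m (p + 1) with rfl | hmp'
    · simp [h1]
    simp [hmp, hmp']

lemma getElem?_eq_some_false {u : List Bool} {i : ℕ} (hi : i < u.length)
    (h : u[i]? ≠ some true) : u[i]? = some false := by
  rw [List.getElem?_eq_getElem hi] at h ⊢
  simpa using h

lemma exists_first_prefixCount_lt {s u : List Bool} (hl : u.length = s.length)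
    (hsu : Dominates s u) (hne : u ≠ s) :
    ∃ i, prefixCount u (i + 1) < prefixCount s (i + 1) ∧ prefixCount u i = prefixCount s i := by
  have hbehind : ∃ j, prefixCount u j < prefixCount s j := by
    by_contra! h
    exact hne (eq_of_prefixCount_eq hl fun m => le_antisymm (hsu m) (h m))
  have hj := Nat.find_spec hbehind
  obtain ⟨i, hi⟩ : ∃ i, Nat.find hbehind = i + 1 :=
    Nat.exists_eq_succ_of_ne_zero fun h => by simp [h, prefixCount_zero] at hj
  exact ⟨i, hi ▸ hj, le_antisymm (hsu i) (not_lt.1 (Nat.find_min hbehind (m := i) (by omega)))⟩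

lemma exists_getElem?_eq_some_true_of_prefixCount_lt {s u : List Bool}
    (hc : u.count true = s.count true) {j : ℕ} (hj : prefixCount u j < prefixCount s j) :
    ∃ k, j ≤ k ∧ u[k]? = some true := by
  by_contra! h
  have hflat := prefixCount_eq_of_forall_ne_true (Nat.le_add_right j (u.length + s.length))
    fun k hk _ => h k hk
  have hs := prefixCount_mono s (Nat.le_add_right j (u.length + s.length))
  have hend : prefixCount u (j + (u.length + s.length)) =
      prefixCount s (j + (u.length + s.length)) := by
    rw [prefixCount_of_length_le (by omega), prefixCount_of_length_le (by omega), hc]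
  omega

/-- The `0 1` to flip is the one ending at the first `1` of `u` after the first index at which
`u` falls behind `s`. -/
lemma exists_shiftOneLeft_of_dominates {s u : List Bool} (hl : u.length = s.length)
    (hc : u.count true = s.count true) (hsu : Dominates s u) (hne : u ≠ s) :
    ∃ p, u[p]? = some false ∧ u[p + 1]? = some true ∧
      prefixCount u (p + 1) < prefixCount s (p + 1) := by
  obtain ⟨i, hi, hbefore⟩ := exists_first_prefixCount_lt hl hsu hne
  have hiu : i < u.length := by
    by_contra! h
    rw [prefixCount_of_length_le (by omega), prefixCount_of_length_le (by omega), hc] at hi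
    exact lt_irrefl _ hi
  have hui : u[i]? = some false := getElem?_eq_some_false hiu fun h => by
    have hu := prefixCount_succ u i
    have hs := prefixCount_succ s i
    rw [if_pos h] at hu
    split_ifs at hs <;> omega
  have hnext := exists_getElem?_eq_some_true_of_prefixCount_lt hc hi
  obtain ⟨⟨hik, huk⟩, hkmin⟩ := Nat.find_spec hnext, fun m => Nat.find_min hnext (m := m)
  set k := Nat.find hnext
  have hflat : prefixCount u k = prefixCount u (i + 1) :=
    prefixCount_eq_of_forall_ne_true hik fun m him hmk h => hkmin m hmk ⟨him, h⟩
  have hk : k - 1 + 1 = k := by omega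
  refine ⟨k - 1, ?_, hk ▸ huk, ?_⟩
  · rcases hik.eq_or_lt with hik | hik
    · simpa [← hik] using hui
    refine getElem?_eq_some_false ?_ fun h => hkmin (k - 1) (by omega) ⟨by omega, h⟩
    have := (List.getElem?_eq_some_iff.1 huk).1
    omega
  · rw [hk, hflat]
    exact hi.trans_le (prefixCount_mono s hik)

theorem Dominates.induction_shiftOneLeft {P : List Bool → Prop}
    (hP : ∀ u p, u[p]? = some false → u[p + 1]? = some true → P u → P (shiftOneLeft u p))
    {s t : List Bool} (hl : t.length = s.length) (hc : t.count true = s.count true)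
    (hst : Dominates s t) (ht : P t) : P s := by
  induction hd : ∑ m ∈ Finset.range (s.length + 1), (prefixCount s m - prefixCount t m)
    using Nat.strong_induction_on generalizing t with
  | _ d ih =>
  by_cases hts : t = s
  · exact hts ▸ ht
  obtain ⟨p, h0, h1, hlt⟩ := exists_shiftOneLeft_of_dominates hl hc hst hts
  have hpc := prefixCount_shiftOneLeft h0 h1
  have hp : p + 1 < t.length := (List.getElem?_eq_some_iff.1 h1).1
  refine ih _ ?_ (by rw [length_shiftOneLeft, hl]) ?_ ?_ (hP t p h0 h1 ht) rfl
  · rw [← hd]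
    refine Finset.sum_lt_sum (fun m _ => by rw [hpc]; omega) ⟨p + 1, ?_, ?_⟩
    · exact Finset.mem_range.2 (by omega)
    · rw [hpc, if_pos rfl]; omega
  · rw [← prefixCount_of_length_le le_rfl, length_shiftOneLeft, hpc, if_neg (by omega),
      prefixCount_of_length_le le_rfl, hc, add_zero]
  · refine (dominates_iff _ _).2 fun m => ?_
    rw [hpc]
    split_ifs with hm
    · exact hm ▸ hlt
    · exact hst m

section RankSequence

variable {n : ℕ}

lemma mem_prefFinset {π : Equiv.Perm (Fin n)} {m : ℕ} {x : Fin n} :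
    x ∈ prefFinset π m ↔ ((π.symm x : Fin n) : ℕ) < m := by
  simp only [prefFinset, Finset.mem_image, Finset.mem_filter, Finset.mem_univ, true_and]
  exact ⟨fun ⟨i, hi, hix⟩ => by rwa [← hix, Equiv.symm_apply_apply],
    fun h => ⟨_, h, π.apply_symm_apply x⟩⟩

lemma prefFinset_succ (π : Equiv.Perm (Fin n)) {m : ℕ} (hm : m < n) :
    prefFinset π (m + 1) = insert (π ⟨m, hm⟩) (prefFinset π m) := by
  ext x
  rw [Finset.mem_insert, mem_prefFinset, mem_prefFinset, ← Equiv.symm_apply_eq, Fin.ext_iff]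
  dsimp only
  omega

lemma prefFinset_mul_swap_of_ne (π : Equiv.Perm (Fin n)) {p m : ℕ} (hp : p + 1 < n)
    (hm : m ≠ p + 1) :
    prefFinset (π * Equiv.swap ⟨p, by omega⟩ ⟨p + 1, hp⟩) m = prefFinset π m := by
  ext x
  rw [mem_prefFinset, mem_prefFinset, Equiv.Perm.mul_def, Equiv.symm_trans_apply,
    Equiv.symm_swap, Equiv.swap_apply_def]
  split_ifs <;> simp only [Fin.ext_iff] at * <;> omega

lemma prefFinset_mul_swap_succ (π : Equiv.Perm (Fin n)) {p : ℕ} (hp : p + 1 < n) :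
    prefFinset (π * Equiv.swap ⟨p, by omega⟩ ⟨p + 1, hp⟩) (p + 1) =
      insert (π ⟨p + 1, hp⟩) (prefFinset π p) := by
  ext x
  rw [Finset.mem_insert, mem_prefFinset, mem_prefFinset, Equiv.Perm.mul_def,
    Equiv.symm_trans_apply, Equiv.symm_swap, Equiv.swap_apply_def, ← Equiv.symm_apply_eq]
  split_ifs <;> simp only [Fin.ext_iff] at * <;> omega

lemma length_rankSeq (rk : Finset (Fin n) → ℕ) (π : Equiv.Perm (Fin n)) :
    (rankSeq rk π).length = n := by
  simp [rankSeq]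

lemma getElem?_rankSeq (rk : Finset (Fin n) → ℕ) (π : Equiv.Perm (Fin n)) {j : ℕ} (hj : j < n) :
    (rankSeq rk π)[j]? = some (decide (rk (prefFinset π (j + 1)) = rk (prefFinset π j) + 1)) := by
  simp [rankSeq, hj]

theorem rankSeq_mul_swap {rk : Finset (Fin n) → ℕ}
    (hunit : ∀ x X, rk (insert x X) ≤ rk X + 1)
    (hsub : ∀ x y X, rk (insert x (insert y X)) + rk X ≤ rk (insert y X) + rk (insert x X))
    (π : Equiv.Perm (Fin n)) {p : ℕ} (hp : p + 1 < n)
    (h0 : (rankSeq rk π)[p]? = some false) (h1 : (rankSeq rk π)[p + 1]? = some true) :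
    rankSeq rk (π * Equiv.swap ⟨p, by omega⟩ ⟨p + 1, hp⟩) = shiftOneLeft (rankSeq rk π) p := by
  have hX1 := prefFinset_succ π (m := p) (by omega)
  have hX2 : prefFinset π (p + 1 + 1) = insert (π ⟨p + 1, hp⟩) (prefFinset π (p + 1)) :=
    prefFinset_succ π hp
  rw [getElem?_rankSeq _ _ (by omega), hX1] at h0
  rw [getElem?_rankSeq _ _ hp, hX2, hX1] at h1
  simp only [Option.some.injEq, decide_eq_false_iff_not, decide_eq_true_eq] at h0 h1
  set X := prefFinset π p
  set x := π ⟨p, by omega⟩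
  set y := π ⟨p + 1, hp⟩
  have hy : rk (insert y X) = rk X + 1 := by
    have := hsub y x X
    have := hunit y X
    omega
  refine List.ext_getElem? fun j => ?_
  rcases lt_or_ge j n with hj | hj
  swap
  · rw [List.getElem?_eq_none (by rw [length_rankSeq]; exact hj),
      List.getElem?_eq_none (by rw [length_shiftOneLeft, length_rankSeq]; exact hj)]
  rw [getElem?_rankSeq _ _ hj, getElem?_shiftOneLeft (by rw [length_rankSeq]; exact hp)]
  rcases eq_or_ne j p with rfl | hjp
  · rw [if_pos rfl, prefFinset_mul_swap_succ, prefFinset_mul_swap_of_ne _ _ (by omega)]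
    simp only [Option.some.injEq, decide_eq_true_eq]
    exact hy
  rcases eq_or_ne j (p + 1) with rfl | hjp'
  · rw [if_neg hjp, if_pos rfl, prefFinset_mul_swap_of_ne _ _ (by omega),
      prefFinset_mul_swap_succ, hX2, hX1]
    simp only [Option.some.injEq, decide_eq_false_iff_not]
    change ¬rk (insert y (insert x X)) = rk (insert y X) + 1
    omega
  · rw [if_neg hjp, if_neg hjp', prefFinset_mul_swap_of_ne _ _ (by omega),
      prefFinset_mul_swap_of_ne _ _ hjp', getElem?_rankSeq _ _ hj]

end RankSequence

section MatroidRank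

variable {n : ℕ} (M : Matroid (Fin n))

lemma mrank_eq_eRk (A : Set (Fin n)) : (mrank M A : ℕ∞) = M.eRk A := by
  rw [mrank, Finset.apply_sup_eq_sup_comp_of_linearOrder _ Nat.mono_cast Nat.cast_zero]
  refine le_antisymm (Finset.sup_le fun I hI => ?_) (Matroid.eRk_le_iff.2 fun I hIA hI => ?_)
  · simp only [Finset.mem_filter, Finset.mem_univ, true_and] at hI
    rw [Function.comp_apply, ← Set.encard_coe_eq_coe_finsetCard]
    exact hI.1.encard_le_eRk_of_subset hI.2
  · rw [← Set.coe_toFinset I, Set.encard_coe_eq_coe_finsetCard]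
    exact Finset.le_sup (f := Nat.cast ∘ Finset.card) (by simpa using ⟨hI, hIA⟩)

lemma mrank_insert_le (x : Fin n) (A : Set (Fin n)) :
    mrank M (insert x A) ≤ mrank M A + 1 := by
  have := M.eRk_insert_le_add_one x A
  rw [← mrank_eq_eRk, ← mrank_eq_eRk] at this
  exact_mod_cast this

lemma mrank_insert_insert_add_le (x y : Fin n) (A : Set (Fin n)) :
    mrank M (insert x (insert y A)) + mrank M A ≤ mrank M (insert y A) + mrank M (insert x A) := by
  have hsub := M.eRk_submod (insert y A) (insert x A)
  have hmono := M.eRk_mono (show A ⊆ insert y A ∩ insert x A from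
    Set.subset_inter (Set.subset_insert y A) (Set.subset_insert x A))
  rw [Set.union_comm, Set.insert_union, Set.union_insert, Set.union_self] at hsub
  simp only [← mrank_eq_eRk] at hsub hmono
  norm_cast at hsub hmono
  omega

end MatroidRank

lemma mem_seqs {n r : ℕ} {l : List Bool} : l ∈ seqs n r ↔ l.length = n ∧ l.count true = r := by
  simp only [seqs, Finset.mem_filter, Finset.mem_image, Finset.mem_univ, true_and]
  refine and_congr_left' ⟨fun ⟨f, hf⟩ => hf ▸ List.length_ofFn, fun h => ?_⟩
  subst h
  exact ⟨fun i => l[i], List.ofFn_getElem⟩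

lemma gCoeff_pos_iff {n : ℕ} {rk : Finset (Fin n) → ℕ} {l : List Bool} :
    0 < gCoeff rk l ↔ ∃ π, rankSeq rk π = l := by
  simp [gCoeff, Finset.card_pos, Finset.Nonempty]

theorem support_isOrderFilter_general (n r : ℕ) (M : Matroid (Fin n))
    (s t : List Bool) (hs : s ∈ seqs n r) (ht : t ∈ seqs n r) (hst : Dominates s t)
    (hgt : 0 < gCoeff (fun A : Finset (Fin n) => mrank M ↑A) t) :
    0 < gCoeff (fun A : Finset (Fin n) => mrank M ↑A) s := by
  have hunit (x : Fin n) (X : Finset (Fin n)) : mrank M ↑(insert x X) ≤ mrank M ↑X + 1 := by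
    rw [Finset.coe_insert]
    exact mrank_insert_le M x X
  have hsub (x y : Fin n) (X : Finset (Fin n)) :
      mrank M ↑(insert x (insert y X)) + mrank M ↑X ≤
        mrank M ↑(insert y X) + mrank M ↑(insert x X) := by
    simp only [Finset.coe_insert]
    exact mrank_insert_insert_add_le M x y X
  rw [gCoeff_pos_iff] at hgt ⊢
  obtain ⟨hsl, hsc⟩ := mem_seqs.1 hs
  obtain ⟨htl, htc⟩ := mem_seqs.1 ht
  refine hst.induction_shiftOneLeft (P := fun u => ∃ π, rankSeq _ π = u) ?_
    (htl.trans hsl.symm) (htc.trans hsc.symm) hgt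
  rintro _ p h0 h1 ⟨π, rfl⟩
  have hp : p + 1 < n := length_rankSeq _ π ▸ (List.getElem?_eq_some_iff.1 h1).1
  exact ⟨_, rankSeq_mul_swap hunit hsub π hp h0 h1⟩

/-- The support of an `(n,r)`-matroid is an order filter in the dominance
order on `(n,r)`-sequences: if `g_t(M) > 0` and `s ⊵ t` then `g_s(M) > 0`. -/
theorem support_isOrderFilter (n r : ℕ) (M : Matroid (Fin n))
    (hE : M.E = Set.univ) (hr : mrank M Set.univ = r)
    (s t : List Bool) (hs : s ∈ seqs n r) (ht : t ∈ seqs n r) (hst : Dominates s t)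
    (hgt : 0 < gCoeff (fun A : Finset (Fin n) => mrank M ↑A) t) :
    0 < gCoeff (fun A : Finset (Fin n) => mrank M ↑A) s :=
  support_isOrderFilter_general n r M s t hs ht hst hgt
end

section
/- Let u be a bit sequence of length λ with exactly ρ ones, and let v be a bit sequence such that u01v is an (n,r)-sequence. Then Sp([u10v]) − Sp([u01v]) = (x−1)^{r−ρ−1} (x+y−xy) (y−1)^{λ−ρ} / ((λ+1)!(n−λ−1)!) in K[x,y]. -/
open MvPolynomial
open scoped Classical

/-
Sp([l]) is a sum over the cut points m of a term depending only on m, on the length and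
weight of l, and on the weight of the prefix of length m. The sequences u10v and u01v have
the same length and weight, and their prefixes have equal weights except for the prefix of
length λ + 1, which weighs ρ + 1 in u10v and ρ in u01v. So only the term m = λ + 1
survives in the difference, and there, with a = r − ρ − 1 and b = λ − ρ,
(x−1)^a (y−1)^b − (x−1)^(a+1) (y−1)^(b+1) = (x−1)^a (1 − (x−1)(y−1)) (y−1)^b
and 1 − (x−1)(y−1) = x + y − xy.
-/

theorem spPoly_sub_spPoly_of_count_take_eq (K : Type*) [Field K] {l l' : List Bool}
    (hlen : l'.length = l.length) (hwt : l'.count true = l.count true) {k : ℕ}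
    (hk : k ≤ l.length)
    (htake : ∀ m, m ≠ k → (l.take m).count true = (l'.take m).count true) :
    spPoly K l - spPoly K l' =
      ((k.factorial * (l.length - k).factorial : ℕ) : K)⁻¹ •
        ((X 0 - 1) ^ (l.count true - (l.take k).count true) *
            (X 1 - 1) ^ (k - (l.take k).count true) -
          (X 0 - 1) ^ (l.count true - (l'.take k).count true) *
            (X 1 - 1) ^ (k - (l'.take k).count true)) := by
  rw [spPoly, spPoly, hlen, hwt, ← Finset.sum_sub_distrib,
    Finset.sum_eq_single_of_mem k (Finset.mem_range_succ_iff.mpr hk)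
      fun m _ hm => by rw [htake m hm, sub_self], smul_sub]

theorem count_take_append_pair_swap (u v : List Bool) (b c : Bool) {m : ℕ}
    (hm : m ≠ u.length + 1) :
    ((u ++ [b, c] ++ v).take m).count true = ((u ++ [c, b] ++ v).take m).count true := by
  rcases le_or_gt m u.length with hle | hlt
  · rw [List.append_assoc, List.append_assoc, List.take_append_of_le_length hle,
      List.take_append_of_le_length hle]
  · obtain ⟨i, rfl⟩ : ∃ i, m = u.length + (i + 2) := ⟨m - u.length - 2, by omega⟩
    simp only [List.append_assoc, List.take_length_add_append, List.cons_append,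
      List.take_succ_cons, List.count_append, List.count_cons]
    omega

theorem take_length_succ_append_pair (u v : List Bool) (b c : Bool) :
    (u ++ [b, c] ++ v).take (u.length + 1) = u ++ [b] := by
  simp [List.append_assoc, List.take_length_add_append]

/-- If `u` has length `λ` and `ρ` ones and `u01v` is an `(n,r)`-sequence,
then `Sp([u10v]) − Sp([u01v]) = (x−1)^{r−ρ−1}(x+y−xy)(y−1)^{λ−ρ}/((λ+1)!(n−λ−1)!)`. -/
theorem spMap_cornerstone (K : Type*) [Field K] (n r lam rho : ℕ) (u v : List Bool)
    (hlen : u.length = lam) (hwt : u.count true = rho)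
    (hn : (u ++ [false, true] ++ v).length = n)
    (hr : (u ++ [false, true] ++ v).count true = r) :
    SpMap K (Finsupp.single (u ++ [true, false] ++ v) 1) -
        SpMap K (Finsupp.single (u ++ [false, true] ++ v) 1) =
      (((lam + 1).factorial * (n - lam - 1).factorial : ℕ) : K)⁻¹ •
        ((X 0 - 1) ^ (r - rho - 1) * (X 0 + X 1 - X 0 * X 1) * (X 1 - 1) ^ (lam - rho)) := by
  have hlen' : (u ++ [true, false] ++ v).length = n := by rw [← hn]; simp
  have hwt' : (u ++ [true, false] ++ v).count true = r := by rw [← hr]; simp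
  have h10 : ((u ++ [true, false] ++ v).take (lam + 1)).count true = rho + 1 := by
    rw [← hlen, take_length_succ_append_pair]; simp [hwt]
  have h01 : ((u ++ [false, true] ++ v).take (lam + 1)).count true = rho := by
    rw [← hlen, take_length_succ_append_pair]; simp [hwt]
  rw [SpMap, Finsupp.linearCombination_single, Finsupp.linearCombination_single, one_smul,
    one_smul, spPoly_sub_spPoly_of_count_take_eq K (by rw [hn, hlen']) (by rw [hr, hwt'])
      (k := lam + 1) (by simp [hlen])
      fun m hm => count_take_append_pair_swap u v _ _ (by omega),
    h10, h01, hlen', hwt']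
  have hrho : rho ≤ lam := hlen ▸ hwt ▸ List.count_le_length
  have hr_gt : rho < r := by rw [← hr, ← hwt]; simp
  obtain ⟨a, ha⟩ : ∃ a, r - rho = a + 1 := ⟨r - rho - 1, by omega⟩
  rw [← Nat.sub_sub r rho 1, ← Nat.sub_sub n lam 1, Nat.add_sub_add_right,
    Nat.sub_add_comm hrho, ha, Nat.add_sub_cancel]
  congr 1
  ring
end

section
/- For every (n,r)-sequence s, the collection {B ⊆ {1,…,n} : |B| = r and the indicator sequence of B is dominated by s} is the collection of bases of a matroid of rank r on {1,2,…,n} (this matroid is the freedom matroid F(s)). -/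
open MvPolynomial
open scoped Classical

/-! The bases of `F(s)` are the `r`-sets meeting every prefix `{i < j}` in at most as many
elements as `s` has ones among its first `j` entries. Basis exchange holds for sets of a fixed
size capped on any family of lower sets of a linear order: to replace `a ∈ B₁ \ B₂`, insert an
element `b ∈ B₂ \ B₁` above `a` if there is one, so that no lower set gains an element;
otherwise take `b = max (B₂ \ B₁)`. A lower set containing `b` but not `a` then contains all
of `B₂ \ B₁`, so `B₂` has more elements in it than `B₁`, and the cap of `B₂` absorbs `b`. -/

open Finset

section CappedBases

variable {α ι : Type*}

def RespectsCaps [DecidableEq α] (D : ι → Finset α) (c : ι → ℕ) (B : Finset α) : Prop :=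
  ∀ i, #(B ∩ D i) ≤ c i

theorem card_insert_erase_inter_le [DecidableEq α] {B D : Finset α} {a b : α}
    (ha : a ∈ B) (hb : b ∉ B) (hab : b ∈ D → a ∈ D) :
    #(insert b (B.erase a) ∩ D) ≤ #(B ∩ D) := by
  by_cases hbD : b ∈ D
  · have hb' : b ∉ B.erase a ∩ D := fun h => hb (mem_of_mem_erase (mem_of_mem_inter_left h))
    rw [insert_inter_of_mem hbD, card_insert_of_notMem hb', erase_inter,
      card_erase_of_mem (mem_inter.mpr ⟨ha, hab hbD⟩)]
    have : 0 < #(B ∩ D) := card_pos.mpr ⟨a, mem_inter.mpr ⟨ha, hab hbD⟩⟩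
    omega
  · rw [insert_inter_of_notMem hbD, erase_inter]
    exact card_erase_le

theorem card_insert_erase_inter_le_of_notMem [DecidableEq α] {B D : Finset α} {a b : α}
    (haD : a ∉ D) : #(insert b (B.erase a) ∩ D) ≤ #(B ∩ D) + 1 := by
  calc #(insert b (B.erase a) ∩ D) ≤ #(insert b (B.erase a ∩ D)) :=
        card_le_card <| by
          rw [insert_inter_distrib]; exact inter_subset_inter_left (subset_insert _ _)
    _ ≤ #(B.erase a ∩ D) + 1 := card_insert_le _ _
    _ = #(B ∩ D) + 1 := by rw [erase_inter, erase_eq_of_notMem (fun h => haD (mem_inter.mp h).2)]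

theorem card_inter_lt_card_inter [DecidableEq α] {B₁ B₂ D : Finset α} {a : α}
    (hcard : #B₁ = #B₂) (hsub : B₂ \ B₁ ⊆ D) (ha₁ : a ∈ B₁) (ha₂ : a ∉ B₂) (haD : a ∉ D) :
    #(B₁ ∩ D) < #(B₂ ∩ D) := by
  have houtside : B₂ \ D ⊂ B₁ \ D := by
    refine ssubset_iff_of_subset (fun x hx => ?_) |>.mpr ⟨a, mem_sdiff.mpr ⟨ha₁, haD⟩, ?_⟩
    · obtain ⟨hx₂, hxD⟩ := mem_sdiff.mp hx
      by_contra hx₁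
      exact hxD (hsub (mem_sdiff.mpr ⟨hx₂, fun h => hx₁ (mem_sdiff.mpr ⟨h, hxD⟩)⟩))
    · exact fun h => ha₂ (mem_sdiff.mp h).1
  have := card_lt_card houtside
  have h₁ := card_inter_add_card_sdiff B₁ D
  have h₂ := card_inter_add_card_sdiff B₂ D
  omega

variable [LinearOrder α] {D : ι → Finset α} {c : ι → ℕ}

theorem RespectsCaps.exchange (hD : ∀ i, IsLowerSet (D i : Set α)) {B₁ B₂ : Finset α}
    (h₁ : RespectsCaps D c B₁) (h₂ : RespectsCaps D c B₂) (hcard : #B₁ = #B₂)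
    {a : α} (ha₁ : a ∈ B₁) (ha₂ : a ∉ B₂) :
    ∃ b ∈ B₂ \ B₁, RespectsCaps D c (insert b (B₁.erase a)) := by
  by_cases habove : ∃ b ∈ B₂ \ B₁, a < b
  · obtain ⟨b, hb, hab⟩ := habove
    refine ⟨b, hb, fun i => (card_insert_erase_inter_le ha₁ (mem_sdiff.mp hb).2 ?_).trans (h₁ i)⟩
    exact fun hbD => hD i hab.le hbD
  push Not at habove
  have hne : (B₂ \ B₁).Nonempty := by
    rw [← card_pos, card_sdiff_comm hcard.symm, card_pos]
    exact ⟨a, mem_sdiff.mpr ⟨ha₁, ha₂⟩⟩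
  set b := (B₂ \ B₁).max' hne
  have hb : b ∈ B₂ \ B₁ := max'_mem _ hne
  refine ⟨b, hb, fun i => ?_⟩
  by_cases hab : b ∈ D i → a ∈ D i
  · exact (card_insert_erase_inter_le ha₁ (mem_sdiff.mp hb).2 hab).trans (h₁ i)
  push Not at hab
  obtain ⟨hbD, haD⟩ := hab
  have hsub : B₂ \ B₁ ⊆ D i := fun x hx => hD i (le_max' _ x hx) hbD
  calc #(insert b (B₁.erase a) ∩ D i) ≤ #(B₁ ∩ D i) + 1 :=
        card_insert_erase_inter_le_of_notMem haD
    _ ≤ #(B₂ ∩ D i) := card_inter_lt_card_inter hcard hsub ha₁ ha₂ haD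
    _ ≤ c i := h₂ i

theorem exists_matroid_isBase_iff_respectsCaps [Finite α] (hD : ∀ i, IsLowerSet (D i : Set α))
    {B₀ : Finset α} (h₀ : RespectsCaps D c B₀) :
    ∃ M : Matroid α, M.E = Set.univ ∧
      ∀ B : Finset α, M.IsBase ↑B ↔ #B = #B₀ ∧ RespectsCaps D c B := by
  let IsCappedBase : Set α → Prop := fun X =>
    ∃ B : Finset α, ↑B = X ∧ #B = #B₀ ∧ RespectsCaps D c B
  have hexchange : Matroid.ExchangeProperty IsCappedBase := by
    rintro _ _ ⟨B₁, rfl, hB₁, h₁⟩ ⟨B₂, rfl, hB₂, h₂⟩ a ⟨ha₁, ha₂⟩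
    obtain ⟨b, hb, hcap⟩ := h₁.exchange hD h₂ (hB₁.trans hB₂.symm) ha₁ ha₂
    refine ⟨b, by exact_mod_cast hb, insert b (B₁.erase a), by push_cast; rfl, ?_, hcap⟩
    have hb₁ : b ∉ B₁.erase a := fun h => (mem_sdiff.mp hb).2 (mem_of_mem_erase h)
    rw [card_insert_of_notMem hb₁, card_erase_of_mem ha₁, ← hB₁]
    have : 0 < #B₁ := card_pos.mpr ⟨a, ha₁⟩
    omega
  refine ⟨Matroid.ofIsBaseOfFinite Set.finite_univ IsCappedBase ⟨B₀, B₀, rfl, rfl, h₀⟩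
    hexchange fun _ _ => Set.subset_univ _, rfl, fun B => ⟨?_, fun h => ⟨B, rfl, h⟩⟩⟩
  rintro ⟨B', hB', h⟩
  rwa [← Finset.coe_injective hB']

end CappedBases

theorem mrank_univ_eq_card_of_isBase {n : ℕ} {M : Matroid (Fin n)} {B : Finset (Fin n)}
    (hB : M.IsBase ↑B) : mrank M Set.univ = #B := by
  refine le_antisymm (Finset.sup_le fun I hI => ?_)
    (le_sup (f := card) (mem_filter.mpr ⟨mem_univ _, hB.indep, Set.subset_univ _⟩))
  obtain ⟨B', hB', hIB'⟩ := (mem_filter.mp hI).2.1.exists_isBase_superset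
  calc #I = (I : Set (Fin n)).ncard := (Set.ncard_coe_finset I).symm
    _ ≤ B'.ncard := Set.ncard_le_ncard hIB'
    _ = #B := by rw [hB'.ncard_eq_ncard_of_isBase hB, Set.ncard_coe_finset]

theorem count_true_eq_sum_toNat (l : List Bool) : l.count true = (l.map Bool.toNat).sum := by
  induction l with
  | nil => rfl
  | cons b t ih => cases b <;> simp [ih]; omega

def finPrefix (n j : ℕ) : Finset (Fin n) :=
  {i | (i : ℕ) < j}

theorem isLowerSet_finPrefix (n j : ℕ) : IsLowerSet (finPrefix n j : Set (Fin n)) :=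
  fun a b hab hb => by
    simp only [finPrefix, coe_filter, mem_univ, true_and, Set.mem_ofPred_eq] at hb ⊢
    omega

theorem count_true_take_indList {n : ℕ} (B : Finset (Fin n)) (j : ℕ) :
    ((indList B).take j).count true = #(B ∩ finPrefix n j) := by
  rw [count_true_eq_sum_toNat, List.map_take, indList, List.map_ofFn, List.sum_take_ofFn]
  simp only [Function.comp_apply, Bool.toNat, cond_eq_ite, decide_eq_true_eq]
  rw [← card_filter]
  congr 1
  ext i
  simp [finPrefix, and_comm]

theorem count_true_indList {n : ℕ} (B : Finset (Fin n)) : (indList B).count true = #B := by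
  rw [← List.take_of_length_le (l := indList B) le_rfl, count_true_take_indList, indList,
    List.length_ofFn, inter_eq_left.mpr fun i _ => by simp [finPrefix]]

theorem dominates_indList_iff {n : ℕ} (s : List Bool) (B : Finset (Fin n)) :
    Dominates s (indList B) ↔
      RespectsCaps (finPrefix n) (fun j => (s.take j).count true) B :=
  forall_congr' fun j => by rw [count_true_take_indList]

/-- For every `(n,r)`-sequence `s`, the sets `B ⊆ {1,…,n}` with `|B| = r`
whose indicator sequence is dominated by `s` are the bases of a rank-`r` matroid on
`{1,…,n}` (the freedom matroid `F(s)`). -/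
theorem exists_freedomMatroid (n r : ℕ) (s : List Bool) (hs : s ∈ seqs n r) :
    ∃ M : Matroid (Fin n), M.E = Set.univ ∧ mrank M Set.univ = r ∧
      ∀ B : Finset (Fin n), (M.IsBase ↑B ↔ B.card = r ∧ Dominates s (indList B)) := by
  obtain ⟨hofFn, hr⟩ := mem_filter.mp hs
  obtain ⟨f, -, rfl⟩ := mem_image.mp hofFn
  set B₀ : Finset (Fin n) := {i | f i}
  have hB₀ : indList B₀ = List.ofFn f := by simp [indList, B₀]
  have hcard₀ : #B₀ = r := by rw [← count_true_indList, hB₀, hr]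
  have hcap₀ := (dominates_indList_iff _ B₀).mp (by rw [hB₀]; exact fun _ => le_rfl)
  obtain ⟨M, hE, hM⟩ := exists_matroid_isBase_iff_respectsCaps (isLowerSet_finPrefix n) hcap₀
  refine ⟨M, hE, ?_, fun B => ?_⟩
  · rw [mrank_univ_eq_card_of_isBase ((hM B₀).mpr ⟨rfl, hcap₀⟩), hcard₀]
  · rw [hM, hcard₀, dominates_indList_iff]
end

section
/- The Tutte polynomial of every (n,r)-matroid M is a K-linear combination of the Tutte polynomials T(F(s)) of the rank-r size-n freedom matroids, as s ranges over all (n,r)-sequences. -/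
open MvPolynomial
open scoped Classical

/-!
Lowering the rank `ρ` of a set `A` by one multiplies its term
`(x - 1) ^ (r - ρ) * (y - 1) ^ (|A| - ρ)` of the Tutte sum by `(x - 1) * (y - 1)`. The rank
function of an `(n, r)`-matroid is at most that of the uniform matroid `F(1^r 0^(n-r))`, so a
geometric sum writes the difference of their Tutte polynomials as a combination of
`(x - 1) ^ u * (y - 1) ^ v * δ` with `u < r`, `v < n - r` and `δ = (x - 1) * (y - 1) - 1`.
Expanding binomially, it suffices to reach `x ^ k * y ^ l * δ` for `k < r`, `l < n - r`, which is
the difference of the Tutte polynomials of `F(0^l 1^(r-k-1) 0 1 0^(n-r-l-1) 1^k)` and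
`F(0^l 1^(r-k) 0^(n-r-l) 1^k)`; both are computed from the rank formula
`rk A = min_j (#ones among s_1, …, s_j + |A ∩ {j+1, …, n}|)` in `F(s)`.
-/

open Finset

namespace FreedomMatroid

section PrefixOnes

def prefixOnes (s : List Bool) (j : ℕ) : ℕ := (s.take j).count true

variable (s : List Bool)

@[simp] lemma prefixOnes_zero : prefixOnes s 0 = 0 := rfl

lemma prefixOnes_succ (j : ℕ) :
    prefixOnes s (j + 1) = prefixOnes s j + s[j]?.toList.count true := by
  rw [prefixOnes, List.take_add_one, List.count_append]; rfl

lemma prefixOnes_mono {j j' : ℕ} (h : j ≤ j') : prefixOnes s j ≤ prefixOnes s j' :=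
  (List.take_sublist_take_left h).count_le true

lemma prefixOnes_succ_le (j : ℕ) : prefixOnes s (j + 1) ≤ prefixOnes s j + 1 := by
  rw [prefixOnes_succ]
  gcongr
  rcases s[j]? with _ | _ | _ <;> simp

lemma prefixOnes_of_length_le {j : ℕ} (h : s.length ≤ j) : prefixOnes s j = s.count true := by
  rw [prefixOnes, List.take_of_length_le h]

lemma prefixOnes_append (t : List Bool) (j : ℕ) :
    prefixOnes (s ++ t) j = prefixOnes s j + prefixOnes t (j - s.length) := by
  rw [prefixOnes, List.take_append, List.count_append]; rfl

@[simp] lemma prefixOnes_replicate (b : Bool) (k j : ℕ) :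
    prefixOnes (List.replicate k b) j = if b then min j k else 0 := by
  cases b <;> simp [prefixOnes, List.take_replicate, List.count_replicate]

end PrefixOnes

section Windows

variable {n : ℕ}

lemma card_filter_val_lt_insert {I : Finset (Fin n)} {e : Fin n} (he : e ∉ I) (j : ℕ) :
    #{i ∈ insert e I | i.val < j} = #{i ∈ I | i.val < j} + if e.val < j then 1 else 0 := by
  rw [filter_insert]
  split_ifs <;> simp_all

def tailCard (A : Finset (Fin n)) (j : ℕ) : ℕ := #{i ∈ A | j ≤ i.val}

lemma tailCard_insert {A : Finset (Fin n)} {e : Fin n} (he : e ∉ A) (j : ℕ) :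
    tailCard (insert e A) j = tailCard A j + if j ≤ e.val then 1 else 0 := by
  rw [tailCard, filter_insert]
  split_ifs <;> simp_all [tailCard]

lemma tailCard_eq_zero {A : Finset (Fin n)} {j : ℕ} (h : ∀ i ∈ A, i.val < j) :
    tailCard A j = 0 := by
  simpa [tailCard] using fun i hi => h i hi

@[simp] lemma tailCard_zero (A : Finset (Fin n)) : tailCard A 0 = #A := by simp [tailCard]

lemma tailCard_of_le (A : Finset (Fin n)) {j : ℕ} (h : n ≤ j) : tailCard A j = 0 :=
  tailCard_eq_zero fun i _ => i.isLt.trans_le h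

@[simp] lemma tailCard_map_finCongr {m : ℕ} (h : m = n) (A : Finset (Fin m)) (j : ℕ) :
    tailCard (A.map (finCongr h).toEmbedding) j = tailCard A j := by
  simp [tailCard, filter_map]

def window (n lo hi : ℕ) : Finset (Fin n) := {i | lo ≤ i.val ∧ i.val < hi}

@[simp] lemma mem_window {lo hi : ℕ} {i : Fin n} :
    i ∈ window n lo hi ↔ lo ≤ i.val ∧ i.val < hi := by
  simp [window]

lemma disjoint_window {lo hi lo' hi' : ℕ} (h : hi ≤ lo') :
    Disjoint (window n lo hi) (window n lo' hi') :=
  disjoint_left.mpr fun i hi hi' => by simp only [mem_window] at hi hi'; omega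

lemma map_valEmbedding_window_subset (lo hi : ℕ) :
    (window n lo hi).map Fin.valEmbedding ⊆ Ico lo hi := by
  intro x hx
  obtain ⟨i, hi, rfl⟩ := mem_map.mp hx
  simpa using hi

lemma card_window {lo hi : ℕ} (h : hi ≤ n) : #(window n lo hi) = hi - lo := by
  rw [← Nat.card_Ico, ← card_map Fin.valEmbedding]
  refine congrArg card (subset_antisymm (map_valEmbedding_window_subset lo hi) fun x hx => ?_)
  rw [mem_Ico] at hx
  exact mem_map.mpr ⟨⟨x, by omega⟩, by simpa using hx, rfl⟩

lemma tailCard_eq_card_inter_window_add (A : Finset (Fin n)) {j j' : ℕ} (h : j ≤ j') :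
    tailCard A j = #(A ∩ window n j j') + tailCard A j' := by
  have hwin : {i ∈ A | j ≤ i.val ∧ i.val < j'} = A ∩ window n j j' := by ext; simp
  have htail : {i ∈ A | j ≤ i.val ∧ ¬ i.val < j'} = {i ∈ A | j' ≤ i.val} := by
    ext; simp; omega
  rw [tailCard, tailCard, ← card_filter_add_card_filter_not (p := fun i : Fin n => i.val < j'),
    filter_filter, filter_filter, hwin, htail]

lemma card_eq_card_inter_window_add_tailCard (A : Finset (Fin n)) (j : ℕ) :
    #A = #(A ∩ window n 0 j) + tailCard A j := by
  rw [← tailCard_zero, tailCard_eq_card_inter_window_add A (Nat.zero_le j)]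

lemma tailCard_eq_card_inter_window (A : Finset (Fin n)) {j : ℕ} (h : j ≤ n) :
    tailCard A j = #(A ∩ window n j n) := by
  rw [tailCard_eq_card_inter_window_add A h, tailCard_of_le A le_rfl, add_zero]

lemma tailCard_le_add (A : Finset (Fin n)) (j j' : ℕ) :
    tailCard A j ≤ tailCard A j' + (j' - j) := by
  rcases le_total j j' with h | h
  · rw [tailCard_eq_card_inter_window_add A h, add_comm]
    gcongr
    calc #(A ∩ window n j j') ≤ #(window n j j') := card_le_card inter_subset_right
      _ = #((window n j j').map Fin.valEmbedding) := (card_map _).symm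
      _ ≤ j' - j :=
        (card_le_card (map_valEmbedding_window_subset j j')).trans_eq (Nat.card_Ico j j')
  · rw [tailCard_eq_card_inter_window_add A h]
    omega

end Windows

section FreedomRank

lemma prefixOnes_indList {n : ℕ} (B : Finset (Fin n)) (j : ℕ) :
    prefixOnes (indList B) j = #{i ∈ B | i.val < j} := by
  induction j with
  | zero => simp
  | succ j ih =>
    rw [prefixOnes_succ, ih]
    by_cases hj : j < n
    · by_cases hm : (⟨j, hj⟩ : Fin n) ∈ B
      · have : {i ∈ B | i.val < j + 1} = insert ⟨j, hj⟩ {i ∈ B | i.val < j} := by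
          ext i; simp [Fin.ext_iff]; grind
        rw [this, card_insert_of_notMem (by simp)]
        simp [indList, hj, hm]
      · have : {i ∈ B | i.val < j + 1} = {i ∈ B | i.val < j} := by
          ext i; simp; grind [Fin.ext_iff]
        rw [this]
        simp [indList, hj, hm]
    · have : {i ∈ B | i.val < j + 1} = {i ∈ B | i.val < j} := by
        ext i; simp; omega
      rw [this]
      simp [indList, hj]

variable {s : List Bool}

lemma dominates_indList_iff {n : ℕ} {I : Finset (Fin n)} :
    Dominates s (indList I) ↔ ∀ j, #{i ∈ I | i.val < j} ≤ prefixOnes s j := by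
  refine forall_congr' fun j => ?_
  rw [← prefixOnes_indList]
  rfl

lemma card_le_count_of_dominates {I : Finset (Fin s.length)} (hI : Dominates s (indList I)) :
    #I ≤ s.count true := by
  have h := dominates_indList_iff.mp hI s.length
  rwa [prefixOnes_of_length_le s le_rfl, filter_true_of_mem fun i _ => i.isLt] at h

lemma exists_insert_dominates {I : Finset (Fin s.length)} (hI : Dominates s (indList I))
    (hlt : #I < s.count true) : ∃ e ∉ I, Dominates s (indList (insert e I)) := by
  rw [dominates_indList_iff] at hI
  have hfull : ∀ j, s.length ≤ j → #{i ∈ I | i.val < j} = #I := fun j hj =>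
    congrArg card (filter_true_of_mem fun i _ => i.isLt.trans_le hj)
  -- the new element is the last position up to which `I` already uses all the ones of `s`
  let P k := prefixOnes s k ≤ #{i ∈ I | i.val < k}
  have hk : P (Nat.findGreatest P s.length) :=
    Nat.findGreatest_spec (P := P) (Nat.zero_le _) (by simp [P])
  have hgt : ∀ j, Nat.findGreatest P s.length < j →
      #{i ∈ I | i.val < j} < prefixOnes s j := by
    intro j hj
    by_cases hjs : j ≤ s.length
    · exact not_le.mp (Nat.findGreatest_is_greatest (P := P) hj hjs)
    · rwa [hfull j (by omega), prefixOnes_of_length_le s (by omega)]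
  have hklen : Nat.findGreatest P s.length < s.length := by
    refine (Nat.findGreatest_le _).lt_of_ne fun hks => ?_
    simp only [P, hks, hfull _ le_rfl, prefixOnes_of_length_le s le_rfl] at hk
    omega
  generalize Nat.findGreatest P s.length = k at hk hgt hklen
  have hkI : (⟨k, hklen⟩ : Fin s.length) ∉ I := by
    intro hkI
    have hsucc : {i ∈ I | i.val < k + 1} = insert ⟨k, hklen⟩ {i ∈ I | i.val < k} := by
      ext i; simp [Fin.ext_iff]; grind
    have := hgt (k + 1) k.lt_succ_self
    rw [hsucc, card_insert_of_notMem (by simp)] at this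
    have := prefixOnes_succ_le s k
    omega
  refine ⟨_, hkI, dominates_indList_iff.mpr fun j => ?_⟩
  rw [card_filter_val_lt_insert hkI]
  split_ifs with hkj
  · exact hgt j hkj
  · simpa using hI j

lemma exists_isFreedomBasis_superset {I : Finset (Fin s.length)}
    (hI : Dominates s (indList I)) : ∃ B, I ⊆ B ∧ IsFreedomBasis s B := by
  rcases (card_le_count_of_dominates hI).lt_or_eq with hlt | heq
  · obtain ⟨e, he, heI⟩ := exists_insert_dominates hI hlt
    obtain ⟨B, hB, hBb⟩ := exists_isFreedomBasis_superset heI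
    exact ⟨B, (subset_insert e I).trans hB, hBb⟩
  · exact ⟨I, subset_refl I, heq, hI⟩
termination_by s.count true - #I
decreasing_by
  rw [card_insert_of_notMem he]
  omega

lemma le_freedomRk {A I : Finset (Fin s.length)} (hIA : I ⊆ A) (hI : Dominates s (indList I)) :
    #I ≤ freedomRk s A := by
  obtain ⟨B, hIB, hB⟩ := exists_isFreedomBasis_superset hI
  calc #I ≤ #(A ∩ B) := card_le_card (subset_inter hIA hIB)
    _ ≤ freedomRk s A := le_sup (f := fun B => #(A ∩ B)) (by simpa using hB)

lemma freedomRk_le (A : Finset (Fin s.length)) (j : ℕ) :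
    freedomRk s A ≤ prefixOnes s j + tailCard A j := by
  refine Finset.sup_le fun B hB => ?_
  have hdom := dominates_indList_iff.mp (mem_filter.mp hB).2.2 j
  calc #(A ∩ B) = #{i ∈ A ∩ B | i.val < j} + #{i ∈ A ∩ B | ¬ i.val < j} :=
        (card_filter_add_card_filter_not _).symm
    _ ≤ #{i ∈ B | i.val < j} + tailCard A j := by
        gcongr
        · exact inter_subset_right
        · exact card_le_card fun i => by simp +contextual
    _ ≤ prefixOnes s j + tailCard A j := by gcongr

lemma exists_dominates_subset (A : Finset (Fin s.length)) :
    ∃ I ⊆ A, Dominates s (indList I) ∧ ∃ j, prefixOnes s j + tailCard A j ≤ #I := by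
  induction A using Finset.induction_on_max with
  | empty => exact ⟨∅, subset_refl _, dominates_indList_iff.mpr (by simp), 0, by simp⟩
  | insert a A hlt ih =>
    obtain ⟨I, hIA, hI, j, hj⟩ := ih
    simp only [Fin.lt_def] at hlt
    have haA : a ∉ A := fun h => (hlt a h).false
    by_cases hroom : #I < prefixOnes s (a.val + 1)
    · have haI : a ∉ I := fun h => haA (hIA h)
      refine ⟨insert a I, insert_subset_insert a hIA, dominates_indList_iff.mpr fun k => ?_,
        j, ?_⟩
      · rw [card_filter_val_lt_insert haI]
        split_ifs with hak
        · have hall : #{i ∈ I | i.val < k} = #I :=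
            congrArg card (filter_true_of_mem fun i hi => (hlt i (hIA hi)).trans hak)
          have := prefixOnes_mono s (show a.val + 1 ≤ k by omega)
          omega
        · simpa using dominates_indList_iff.mp hI k
      · rw [tailCard_insert haA, card_insert_of_notMem haI]
        split_ifs with hja
        · omega
        · have := tailCard_eq_zero (j := j) fun i hi => (hlt i hi).trans (not_le.mp hja)
          have := prefixOnes_mono s (show a.val + 1 ≤ j by omega)
          omega
    · refine ⟨I, hIA.trans (subset_insert a A), hI, a.val + 1, ?_⟩
      rw [tailCard_insert haA, tailCard_eq_zero fun i hi => (hlt i hi).trans (lt_add_one _)]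
      simp only [if_neg (Nat.not_succ_le_self _)]
      omega

lemma le_freedomRk_of_forall {A : Finset (Fin s.length)} {m : ℕ}
    (h : ∀ j, m ≤ prefixOnes s j + tailCard A j) : m ≤ freedomRk s A := by
  obtain ⟨I, hIA, hI, j, hj⟩ := exists_dominates_subset A
  exact (h j).trans (hj.trans (le_freedomRk hIA hI))

end FreedomRank

section JoinList

variable (a b c d : ℕ)

lemma length_joinList : (joinList (a, b, c, d)).length = a + b + c + d := by
  simp [joinList, add_assoc]

lemma count_joinList : (joinList (a, b, c, d)).count true = b + d := by
  simp [joinList, List.count_replicate]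

lemma prefixOnes_joinList (j : ℕ) :
    prefixOnes (joinList (a, b, c, d)) j = min (j - a) b + min (j - (a + b + c)) d := by
  simp only [joinList, prefixOnes_append, prefixOnes_replicate, List.length_append,
    List.length_replicate]
  simp

/-- The rank function of `F(joinList (a, b, c, d))`, which does not depend on `d`. -/
def joinRk {n : ℕ} (A : Finset (Fin n)) : ℕ := min (tailCard A a) (b + tailCard A (a + b + c))

lemma freedomRk_joinList (A : Finset (Fin (joinList (a, b, c, d)).length)) :
    freedomRk (joinList (a, b, c, d)) A = joinRk a b c A := by
  have hupper := fun j => freedomRk_le A j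
  simp only [prefixOnes_joinList] at hupper
  refine le_antisymm ?_ (le_freedomRk_of_forall fun j => ?_)
  · have := hupper a
    have := hupper (a + b + c)
    rw [joinRk]
    omega
  · have := tailCard_le_add A a j
    have := tailCard_le_add A (a + b + c) j
    have := tailCard_le_add A (a + b + c) (a + b + c + d)
    have := tailCard_of_le A (length_joinList a b c d).le
    rw [prefixOnes_joinList, joinRk]
    omega

/-- `joinList (a, b + 1, c + 1, d)` with its `1, 0` at positions `a + b, a + b + 1` swapped. -/
def swappedJoinList : List Bool :=
  List.replicate a false ++ List.replicate b true ++ [false, true] ++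
    List.replicate c false ++ List.replicate d true

lemma length_swappedJoinList : (swappedJoinList a b c d).length = a + b + c + d + 2 := by
  simp [swappedJoinList]; omega

lemma count_swappedJoinList : (swappedJoinList a b c d).count true = b + 1 + d := by
  simp [swappedJoinList, List.count_replicate]; omega

lemma prefixOnes_swappedJoinList (j : ℕ) :
    prefixOnes (swappedJoinList a b c d) j =
      min (j - a) b + min (j - (a + b + 1)) 1 + min (j - (a + b + c + 2)) d := by
  have hpair : ∀ k, prefixOnes [false, true] k = min (k - 1) 1 := by
    rintro (_ | _ | k) <;> simp [prefixOnes]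
  simp only [swappedJoinList, prefixOnes_append, prefixOnes_replicate, hpair, List.length_append,
    List.length_replicate, List.length_cons, List.length_nil]
  simp
  omega

lemma freedomRk_swappedJoinList (A : Finset (Fin (swappedJoinList a b c d).length)) :
    freedomRk (swappedJoinList a b c d) A =
      min (joinRk a (b + 1) (c + 1) A) (b + tailCard A (a + b + 1)) := by
  have hupper := fun j => freedomRk_le A j
  simp only [prefixOnes_swappedJoinList] at hupper
  rw [joinRk, show a + (b + 1) + (c + 1) = a + b + c + 2 by omega]
  refine le_antisymm ?_ (le_freedomRk_of_forall fun j => ?_)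
  · have := hupper a
    have := hupper (a + b + 1)
    have := hupper (a + b + c + 2)
    omega
  · have := tailCard_le_add A a j
    have := tailCard_le_add A (a + b + 1) j
    have := tailCard_le_add A (a + b + c + 2) j
    have := tailCard_le_add A (a + b + c + 2) (a + b + c + d + 2)
    have := tailCard_of_le A (length_swappedJoinList a b c d).le
    rw [prefixOnes_swappedJoinList]
    omega

end JoinList

section TutteDifference

variable (K : Type*) [Field K]

lemma freedomTutte_eq_tutte {s : List Bool} {n : ℕ} (h : s.length = n)
    {rk : Finset (Fin n) → ℕ} (hrk : ∀ A, freedomRk s A = rk (A.map (finCongr h).toEmbedding)) :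
    freedomTutte K s = tutte K (s.count true) rk := by
  subst h
  simp only [finCongr_refl, Equiv.refl_toEmbedding, map_refl] at hrk
  simp only [freedomTutte, tutte, hrk]

noncomputable def dropFactor : MvPolynomial (Fin 2) K := (X 0 - 1) * (X 1 - 1) - 1

lemma pow_add_mul_pow_add_sub {R : Type*} [CommRing R] (x y : R) (u v d : ℕ) :
    x ^ (u + d) * y ^ (v + d) - x ^ u * y ^ v =
      ∑ i ∈ range d, x ^ (u + i) * y ^ (v + i) * (x * y - 1) := by
  rw [show x ^ (u + d) * y ^ (v + d) - x ^ u * y ^ v = x ^ u * y ^ v * ((x * y) ^ d - 1) by ring,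
    ← geom_sum_mul, sum_mul, mul_sum]
  exact sum_congr rfl fun i _ => by ring

lemma tutte_sub_tutte {n r : ℕ} (rk₁ rk₂ : Finset (Fin n) → ℕ) (h : ∀ A, rk₂ A ≤ rk₁ A)
    (hr : ∀ A, rk₁ A ≤ r) (hcard : ∀ A, rk₁ A ≤ #A) :
    tutte K r rk₂ - tutte K r rk₁ = ∑ A, ∑ i ∈ range (rk₁ A - rk₂ A),
      (X 0 - 1) ^ (r - rk₁ A + i) * (X 1 - 1) ^ (#A - rk₁ A + i) * dropFactor K := by
  rw [tutte, tutte, ← sum_sub_distrib]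
  refine sum_congr rfl fun A _ => ?_
  have := h A; have := hr A; have := hcard A
  rw [show r - rk₂ A = r - rk₁ A + (rk₁ A - rk₂ A) by omega,
    show #A - rk₂ A = #A - rk₁ A + (rk₁ A - rk₂ A) by omega, pow_add_mul_pow_add_sub]
  rfl

lemma freedomTutte_joinList {n : ℕ} (a b c d : ℕ) (h : a + b + c + d = n) :
    freedomTutte K (joinList (a, b, c, d)) =
      tutte K (b + d) (joinRk a b c : Finset (Fin n) → ℕ) := by
  rw [freedomTutte_eq_tutte K ((length_joinList a b c d).trans h) fun A => ?_, count_joinList]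
  simp only [freedomRk_joinList, joinRk, tailCard_map_finCongr]

lemma freedomTutte_swappedJoinList {n : ℕ} (a b c d : ℕ) (h : a + b + c + d + 2 = n) :
    freedomTutte K (swappedJoinList a b c d) = tutte K (b + 1 + d) fun A : Finset (Fin n) =>
      min (joinRk a (b + 1) (c + 1) A) (b + tailCard A (a + b + 1)) := by
  rw [freedomTutte_eq_tutte K ((length_swappedJoinList a b c d).trans h) fun A => ?_,
    count_swappedJoinList]
  simp only [freedomRk_swappedJoinList, joinRk, tailCard_map_finCongr]

end TutteDifference

lemma sum_Icc_inter_mul_inter {α R : Type*} [DecidableEq α] [CommSemiring R] {Z M O : Finset α}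
    (hZM : Disjoint Z M) (hZO : Disjoint Z O) (hMO : Disjoint M O) (f g : Finset α → R) :
    ∑ A ∈ Icc M (Z ∪ M ∪ O), f (A ∩ Z) * g (A ∩ O) =
      (∑ S ∈ Z.powerset, f S) * ∑ T ∈ O.powerset, g T := by
  rw [sum_mul_sum, ← sum_product']
  rw [disjoint_left] at hZM hZO hMO
  refine sum_nbij' (fun A => (A ∩ Z, A ∩ O)) (fun ST => ST.1 ∪ M ∪ ST.2) ?_ ?_ ?_ ?_
    fun _ _ => rfl
  · simp
  · simp only [mem_product, mem_powerset, mem_Icc]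
    grind
  · simp only [mem_Icc]
    intro A hA
    ext x
    grind
  · simp only [mem_product, mem_powerset]
    intro ST hST
    ext x <;> grind

section KeyIdentity

variable (n a b c : ℕ)

/-- The sets on which the rank of `F(swappedJoinList a b c d)` is one less than that of
`F(joinList (a, b + 1, c + 1, d))`: those containing the block of `b + 1` ones and avoiding the
block of `c + 1` zeros after it. -/
def dropSets : Finset (Finset (Fin n)) :=
  Icc (window n a (a + b + 1)) (window n 0 a ∪ window n a (a + b + 1) ∪ window n (a + b + c + 2) n)

variable {n a b c}

lemma mem_dropSets_iff (h : a + b + c + 2 ≤ n) (A : Finset (Fin n)) :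
    A ∈ dropSets n a b c ↔
      b + 1 ≤ #(A ∩ window n a (a + b + 1)) ∧ #(A ∩ window n (a + b + 1) (a + b + c + 2)) = 0 := by
  have hM : #(window n a (a + b + 1)) = b + 1 := by rw [card_window (by omega)]; omega
  have hcover : ∀ i ∈ A,
      i ∈ window n 0 a ∪ window n a (a + b + 1) ∪ window n (a + b + c + 2) n ↔
        i ∉ window n (a + b + 1) (a + b + c + 2) := fun i _ => by
    have := i.isLt
    simp only [mem_union, mem_window]
    omega
  rw [dropSets, mem_Icc, card_eq_zero, ← disjoint_iff_inter_eq_empty, disjoint_left,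
    ← forall₂_congr hcover, ← hM, eq_iff_card_le_of_subset inter_subset_right, inter_eq_right]
  rfl

lemma sum_range_joinRk_sub {R : Type*} [AddCommMonoid R] (f : ℕ → ℕ → R) {d : ℕ}
    (hn : a + b + c + d + 2 = n) (A : Finset (Fin n)) :
    ∑ i ∈ range (joinRk a (b + 1) (c + 1) A -
        min (joinRk a (b + 1) (c + 1) A) (b + tailCard A (a + b + 1))),
      f (b + 1 + d - joinRk a (b + 1) (c + 1) A + i) (#A - joinRk a (b + 1) (c + 1) A + i) =
    if A ∈ dropSets n a b c then
      f (d - #(A ∩ window n (a + b + c + 2) n)) #(A ∩ window n 0 a)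
    else 0 := by
  obtain ⟨ρ, hρ⟩ : ∃ ρ, joinRk a (b + 1) (c + 1) A = ρ := ⟨_, rfl⟩
  have hρ' : ρ = min (tailCard A a) (b + 1 + tailCard A (a + b + c + 2)) := by
    rw [← hρ, joinRk, show a + (b + 1) + (c + 1) = a + b + c + 2 by omega]
  have h₀ := card_eq_card_inter_window_add_tailCard A a
  have h₁ := tailCard_eq_card_inter_window_add A (show a ≤ a + b + 1 by omega)
  have h₂ := tailCard_eq_card_inter_window_add A (show a + b + 1 ≤ a + b + c + 2 by omega)
  have h₃ := tailCard_eq_card_inter_window A (show a + b + c + 2 ≤ n by omega)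
  have hM : #(A ∩ window n a (a + b + 1)) ≤ b + 1 :=
    (card_le_card inter_subset_right).trans_eq (by rw [card_window (by omega)]; omega)
  rw [hρ]
  split_ifs with hA <;> rw [mem_dropSets_iff (by omega)] at hA
  · rw [show ρ - min ρ (b + tailCard A (a + b + 1)) = 1 by omega, sum_range_one,
      show b + 1 + d - ρ + 0 = d - #(A ∩ window n (a + b + c + 2) n) by omega,
      show #A - ρ + 0 = #(A ∩ window n 0 a) by omega]
  · rw [show ρ - min ρ (b + tailCard A (a + b + 1)) = 0 by omega, sum_range_zero]

lemma sum_dropSets {R : Type*} [CommRing R] (x y : R) {d : ℕ} (hn : a + b + c + d + 2 = n) :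
    ∑ A ∈ dropSets n a b c,
      (x - 1) ^ (d - #(A ∩ window n (a + b + c + 2) n)) * (y - 1) ^ #(A ∩ window n 0 a) =
      x ^ d * y ^ a := by
  simp only [dropSets, mul_comm ((x - 1) ^ _)]
  rw [sum_Icc_inter_mul_inter (disjoint_window le_rfl) (disjoint_window (by omega))
    (disjoint_window (by omega)) (fun S => (y - 1) ^ #S) (fun T => (x - 1) ^ (d - #T))]
  have hZ := sum_pow_mul_eq_add_pow (y - 1) 1 (window n 0 a)
  have hO := sum_pow_mul_eq_add_pow 1 (x - 1) (window n (a + b + c + 2) n)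
  rw [sub_add_cancel, card_window (by omega), Nat.sub_zero] at hZ
  rw [add_sub_cancel, card_window le_rfl, show n - (a + b + c + 2) = d by omega] at hO
  simp only [one_pow, mul_one, one_mul] at hZ hO
  rw [hZ, hO, mul_comm]

end KeyIdentity

/-- In both matroids the first `a` elements are loops and the last `d` are coloops. -/
theorem freedomTutte_swappedJoinList_sub_joinList (K : Type*) [Field K] (a b c d : ℕ) :
    freedomTutte K (swappedJoinList a b c d) - freedomTutte K (joinList (a, b + 1, c + 1, d)) =
      X 0 ^ d * X 1 ^ a * dropFactor K := by
  rw [freedomTutte_swappedJoinList K a b c d rfl,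
    freedomTutte_joinList K (n := a + b + c + d + 2) a (b + 1) (c + 1) d (by omega),
    tutte_sub_tutte K _ _ (fun A => min_le_left _ _) (fun A => ?_) (fun A => ?_)]
  · refine (sum_congr rfl fun A _ => sum_range_joinRk_sub
      (fun u v => (X 0 - 1) ^ u * (X 1 - 1) ^ v * dropFactor K) rfl A).trans ?_
    rw [sum_ite_mem, univ_inter, ← sum_mul, sum_dropSets (X 0) (X 1) rfl]
  · have := tailCard_le_add A (a + (b + 1) + (c + 1)) (a + b + c + d + 2)
    have := tailCard_of_le A le_rfl
    rw [joinRk]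
    omega
  · have := tailCard_le_add A a 0
    rw [tailCard_zero] at this
    rw [joinRk]
    omega

lemma sub_one_pow_mul_sub_one_pow_mul_mem {R A : Type*} [CommRing R] [CommRing A] [Algebra R A]
    (V : Submodule R A) {x y z : A} {r m : ℕ} (h : ∀ k < r, ∀ l < m, x ^ k * y ^ l * z ∈ V)
    {u v : ℕ} (hu : u < r) (hv : v < m) : (x - 1) ^ u * (y - 1) ^ v * z ∈ V := by
  rw [sub_eq_add_neg x, sub_eq_add_neg y, add_pow, add_pow, sum_mul, sum_mul]
  refine sum_mem fun k hk => ?_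
  rw [mul_sum, sum_mul]
  refine sum_mem fun l hl => ?_
  rw [mem_range] at hk hl
  convert V.smul_mem ((-1) ^ (u - k) * u.choose k * ((-1) ^ (v - l) * v.choose l) : R)
    (h k (by omega) l (by omega)) using 1
  simp only [Algebra.smul_def, map_mul, map_pow, map_neg, map_one, map_natCast]
  ring

section Span

variable (K : Type*) [Field K] {n r : ℕ}

lemma mem_seqs {l : List Bool} (hlen : l.length = n) (hcount : l.count true = r) :
    l ∈ seqs n r := by
  subst hlen
  exact mem_filter.mpr ⟨mem_image.mpr ⟨l.get, mem_univ _, List.ofFn_get l⟩, hcount⟩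

lemma X_pow_mul_X_pow_mul_dropFactor_mem_span {k l : ℕ} (hk : k < r) (hl : l < n - r) :
    X 0 ^ k * X 1 ^ l * dropFactor K ∈ Submodule.span K (freedomTutte K '' seqs n r) := by
  rw [← freedomTutte_swappedJoinList_sub_joinList K l (r - k - 1) (n - r - l - 1) k]
  refine Submodule.sub_mem _ (Submodule.subset_span ⟨_, mem_seqs ?_ ?_, rfl⟩)
    (Submodule.subset_span ⟨_, mem_seqs ?_ ?_, rfl⟩)
  · rw [length_swappedJoinList]; omega
  · rw [count_swappedJoinList]; omega
  · rw [length_joinList]; omega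
  · rw [count_joinList]; omega

lemma tutte_mem_span (rk : Finset (Fin n) → ℕ) (hrn : r ≤ n) (hcard : ∀ A, rk A ≤ #A)
    (hr : ∀ A, rk A ≤ r) (hcorank : ∀ A, r ≤ rk A + (n - #A)) :
    tutte K r rk ∈ Submodule.span K (freedomTutte K '' seqs n r) := by
  have huniform : ∀ A : Finset (Fin n), joinRk 0 r (n - r) A = min #A r := fun A => by
    rw [joinRk, tailCard_zero, tailCard_of_le A (by omega), add_zero]
  have hmem : tutte K r (joinRk 0 r (n - r) : Finset (Fin n) → ℕ) ∈
      Submodule.span K (freedomTutte K '' seqs n r) := by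
    have h := freedomTutte_joinList K (n := n) 0 r (n - r) 0 (by omega)
    rw [add_zero] at h
    rw [← h]
    refine Submodule.subset_span ⟨_, mem_seqs ?_ ?_, rfl⟩
    · rw [length_joinList]; omega
    · rw [count_joinList, add_zero]
  rw [← sub_add_cancel (tutte K r rk) (tutte K r (joinRk 0 r (n - r))),
    tutte_sub_tutte K _ _ (fun A => by rw [huniform]; exact le_min (hcard A) (hr A))
      (fun A => by rw [huniform]; exact min_le_right _ _)
      (fun A => by rw [huniform]; exact min_le_left _ _)]
  refine add_mem (sum_mem fun A _ => sum_mem fun i hi => ?_) hmem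
  have := hcard A; have := hr A; have := hcorank A; have := huniform A
  have := (card_le_univ A).trans_eq (Fintype.card_fin n)
  rw [mem_range] at hi
  exact sub_one_pow_mul_sub_one_pow_mul_mem _
    (fun k hk l hl => X_pow_mul_X_pow_mul_dropFactor_mem_span K hk hl) (by omega) (by omega)

end Span

section MatroidRank

variable {n : ℕ} (M : Matroid (Fin n))

lemma mrank_le_card (A : Finset (Fin n)) : mrank M A ≤ #A :=
  Finset.sup_le fun _ hI => card_le_card (coe_subset.mp (mem_filter.mp hI).2.2)

lemma mrank_mono {A B : Set (Fin n)} (h : A ⊆ B) : mrank M A ≤ mrank M B :=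
  sup_mono fun _ hI => by
    simp only [mem_filter, mem_univ, true_and] at hI ⊢
    exact ⟨hI.1, hI.2.trans h⟩

lemma mrank_insert_le (A : Set (Fin n)) (e : Fin n) : mrank M (insert e A) ≤ mrank M A + 1 := by
  refine Finset.sup_le fun I hI => ?_
  simp only [mem_filter, mem_univ, true_and] at hI
  have hle : #(I.erase e) ≤ mrank M A := le_sup (f := card) <| by
    simp only [mem_filter, mem_univ, true_and, coe_erase]
    exact ⟨hI.1.subset Set.sdiff_subset, fun x hx => (hI.2 hx.1).resolve_left hx.2⟩
  have := pred_card_le_card_erase (s := I) (a := e)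
  omega

lemma mrank_union_le (A : Set (Fin n)) (C : Finset (Fin n)) :
    mrank M (A ∪ C) ≤ mrank M A + #C := by
  induction C using Finset.induction_on with
  | empty => simp
  | insert e C he ih =>
    rw [coe_insert, Set.union_insert, card_insert_of_notMem he]
    have := mrank_insert_le M (A ∪ C) e
    omega

lemma mrank_univ_le (A : Finset (Fin n)) : mrank M Set.univ ≤ mrank M A + (n - #A) := by
  have h := mrank_union_le M A (univ \ A)
  rwa [coe_sdiff, coe_univ, Set.union_sdiff_self, Set.union_univ, card_univ_sdiff,
    Fintype.card_fin] at h

end MatroidRank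

end FreedomMatroid

theorem tutte_mem_span_freedomTutte_general (K : Type*) [Field K] (n r : ℕ) (M : Matroid (Fin n))
    (hr : mrank M Set.univ = r) :
    ∃ c : List Bool → K,
      tutte K r (fun A : Finset (Fin n) => mrank M ↑A) =
        ∑ s ∈ seqs n r, c s • freedomTutte K s := by
  subst hr
  have hrn : mrank M Set.univ ≤ n := by simpa using FreedomMatroid.mrank_le_card M univ
  obtain ⟨c, hc⟩ := (Submodule.mem_span_image_finset_iff_exists_fun' K).mp <|
    FreedomMatroid.tutte_mem_span K _ hrn (FreedomMatroid.mrank_le_card M)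
      (fun A => FreedomMatroid.mrank_mono M (Set.subset_univ _)) (FreedomMatroid.mrank_univ_le M)
  exact ⟨c, hc.symm⟩

/-- The Tutte polynomial of every `(n,r)`-matroid is a `K`-linear
combination of the Tutte polynomials of the rank-`r` size-`n` freedom matroids. -/
theorem tutte_mem_span_freedomTutte (K : Type*) [Field K] (n r : ℕ) (M : Matroid (Fin n))
    (hE : M.E = Set.univ) (hr : mrank M Set.univ = r) :
    ∃ c : List Bool → K,
      tutte K r (fun A : Finset (Fin n) => mrank M ↑A) =
        ∑ s ∈ seqs n r, c s • freedomTutte K s :=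
  tutte_mem_span_freedomTutte_general K n r M hr
end

section
/- Let u and v be bit sequences such that u10v is an (n,r)-sequence (so there is a descent '10' at the indicated position). Then T(F(u10v)) = T(F(u1v)) + T(F(u0v)) in K[x,y], where F(u1v) and F(u0v) are freedom matroids on the ground set {1,…,n−1}, of ranks r and r−1 respectively. -/
open MvPolynomial
open scoped Classical

section DCinfra

/-- prefix ones-count of a bit list -/
def sig (s : List Bool) (j : ℕ) : ℕ := (s.take j).count true

/-- number of elements of `B` below `j` -/
noncomputable def cnt {n : ℕ} (B : Finset (Fin n)) (j : ℕ) : ℕ :=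
  (B.filter fun i : Fin n => (i : ℕ) < j).card

lemma sig_mono (s : List Bool) {i j : ℕ} (h : i ≤ j) : sig s i ≤ sig s j := by
  unfold sig
  have : s.take i <+: s.take j := by
    rw [List.prefix_take_iff]
    exact ⟨List.take_prefix _ _, by simp [Nat.le_min]; omega⟩
  exact this.count_le true

lemma sig_of_le {s : List Bool} {j : ℕ} (h : s.length ≤ j) : sig s j = s.count true := by
  unfold sig; rw [List.take_of_length_le h]

lemma sig_length (s : List Bool) : sig s s.length = s.count true := sig_of_le le_rfl

lemma sig_le_add (s : List Bool) {i j : ℕ} (h : i ≤ j) : sig s j ≤ sig s i + (j - i) := by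
  unfold sig
  have : s.take j = s.take i ++ (s.drop i).take (j - i) := by
    rw [← List.take_add]; congr 1; omega
  rw [this, List.count_append]
  have h2 : ((s.drop i).take (j - i)).count true ≤ j - i :=
    le_trans List.count_le_length (by simp)
  omega

lemma sig_append_left {a b : List Bool} {j : ℕ} (h : j ≤ a.length) :
    sig (a ++ b) j = sig a j := by
  unfold sig
  rw [List.take_append]
  have h0 : j - a.length = 0 := by omega
  simp [h0]

lemma sig_append_right {a b : List Bool} {j : ℕ} (h : a.length ≤ j) :
    sig (a ++ b) j = a.count true + sig b (j - a.length) := by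
  unfold sig
  rw [List.take_append, List.take_of_length_le h, List.count_append]

lemma cnt_of_le {n : ℕ} (B : Finset (Fin n)) {j : ℕ} (h : n ≤ j) : cnt B j = B.card := by
  unfold cnt
  congr 1
  apply Finset.filter_true_of_mem
  intro x _; exact lt_of_lt_of_le x.isLt h

lemma cnt_le_card {n : ℕ} (B : Finset (Fin n)) (j : ℕ) : cnt B j ≤ B.card :=
  Finset.card_filter_le _ _

lemma cnt_mono {n : ℕ} (B : Finset (Fin n)) {i j : ℕ} (h : i ≤ j) : cnt B i ≤ cnt B j := by
  apply Finset.card_le_card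
  intro x hx
  rw [Finset.mem_filter] at *
  exact ⟨hx.1, lt_of_lt_of_le hx.2 h⟩

lemma cnt_insert {n : ℕ} {B : Finset (Fin n)} {a : Fin n} (ha : a ∉ B) (j : ℕ) :
    cnt (insert a B) j = cnt B j + if (a : ℕ) < j then 1 else 0 := by
  unfold cnt
  rw [Finset.filter_insert]
  split
  · rw [Finset.card_insert_of_notMem (by simp [ha])]
  · simp

lemma cnt_erase {n : ℕ} {B : Finset (Fin n)} {a : Fin n} (ha : a ∈ B) (j : ℕ) :
    cnt B j = cnt (B.erase a) j + if (a : ℕ) < j then 1 else 0 := by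
  have h1 : a ∉ B.erase a := Finset.notMem_erase a B
  have h2 : insert a (B.erase a) = B := Finset.insert_erase ha
  rw [← h2, cnt_insert h1 j, Finset.erase_insert h1]

lemma cnt_le_of_subset {n : ℕ} {A B : Finset (Fin n)} (h : A ⊆ B) (j : ℕ) :
    cnt A j ≤ cnt B j :=
  Finset.card_le_card (Finset.filter_subset_filter _ h)

lemma count_take_ofFn {n : ℕ} (f : Fin n → Bool) (j : ℕ) :
    ((List.ofFn f).take j).count true
      = (Finset.univ.filter fun i : Fin n => (i : ℕ) < j ∧ f i = true).card := by
  induction j with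
  | zero => simp
  | succ j ih =>
    rw [List.take_succ, List.count_append, ih]
    by_cases hj : j < n
    · have hget : (List.ofFn f)[j]? = some (f ⟨j, hj⟩) := by
        rw [List.getElem?_ofFn]
        simp [List.ofFnNthVal, hj]
      rw [hget]
      by_cases hf : f ⟨j, hj⟩ = true
      · have hsplit : (Finset.univ.filter fun i : Fin n => (i : ℕ) < j + 1 ∧ f i = true)
            = insert (⟨j, hj⟩ : Fin n)
                (Finset.univ.filter fun i : Fin n => (i : ℕ) < j ∧ f i = true) := by
          ext x
          simp only [Finset.mem_filter, Finset.mem_insert, Finset.mem_univ, true_and]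
          constructor
          · rintro ⟨hlt, hfx⟩
            rcases Nat.lt_succ_iff_lt_or_eq.mp hlt with h | h
            · exact Or.inr ⟨h, hfx⟩
            · exact Or.inl (Fin.ext h)
          · rintro (rfl | ⟨hlt, hfx⟩)
            · exact ⟨by simp, hf⟩
            · exact ⟨by omega, hfx⟩
        rw [hsplit, Finset.card_insert_of_notMem (by simp)]
        simp [hf]
      · have hsplit : (Finset.univ.filter fun i : Fin n => (i : ℕ) < j + 1 ∧ f i = true)
            = Finset.univ.filter fun i : Fin n => (i : ℕ) < j ∧ f i = true := by
          apply Finset.filter_congr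
          intro x _
          constructor
          · rintro ⟨hlt, hfx⟩
            rcases Nat.lt_succ_iff_lt_or_eq.mp hlt with h | h
            · exact ⟨h, hfx⟩
            · exact absurd (by rw [← hfx]; congr 1; exact Fin.ext h.symm) hf
          · rintro ⟨hlt, hfx⟩; exact ⟨by omega, hfx⟩
        rw [hsplit]
        simp [hf]
    · have hget : (List.ofFn f)[j]? = none := by
        rw [List.getElem?_ofFn]
        simp [List.ofFnNthVal, hj]
      rw [hget]
      simp only [Option.toList_none, List.count_nil, add_zero]
      congr 1
      apply Finset.filter_congr
      intro x _
      have hx : (x : ℕ) < j := lt_of_lt_of_le x.isLt (by omega)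
      have hx1 : (x : ℕ) < j + 1 := by omega
      simp [hx, hx1]

lemma count_take_indList {n : ℕ} (B : Finset (Fin n)) (j : ℕ) :
    ((indList B).take j).count true = cnt B j := by
  rw [indList, count_take_ofFn]
  unfold cnt
  have : (Finset.univ.filter fun i : Fin n => (i : ℕ) < j ∧ decide (i ∈ B) = true)
      = B.filter fun i : Fin n => (i : ℕ) < j := by
    ext x
    simp [and_comm]
  rw [this]

def emb {N m : ℕ} (h : m + 1 = N) (t : ℕ) : Fin m ↪ Fin N where
  toFun x := ⟨if (x : ℕ) < t then x else x + 1, by split <;> omega⟩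
  inj' := by
    intro a b hab
    have := congrArg Fin.val hab
    simp only at this
    apply Fin.ext
    split at this <;> split at this <;> omega

lemma emb_val {N m : ℕ} (h : m + 1 = N) (t : ℕ) (x : Fin m) :
    (emb h t x : ℕ) = if (x : ℕ) < t then (x : ℕ) else (x : ℕ) + 1 := rfl

lemma emb_ne {N m : ℕ} (h : m + 1 = N) {t : ℕ} (htN : t < N) (x : Fin m) :
    emb h t x ≠ ⟨t, htN⟩ := by
  intro hx
  have := congrArg Fin.val hx
  rw [emb_val] at this
  simp only at this
  split at this <;> omega

lemma q_not_mem_map {N m : ℕ} (h : m + 1 = N) {t : ℕ} (htN : t < N)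
    (A : Finset (Fin m)) : (⟨t, htN⟩ : Fin N) ∉ A.map (emb h t) := by
  rw [Finset.mem_map]
  rintro ⟨x, -, hx⟩
  exact emb_ne h htN x hx

lemma exists_emb_eq {N m : ℕ} (h : m + 1 = N) {t : ℕ} (htm : t ≤ m) (y : Fin N)
    (hy : (y : ℕ) ≠ t) : ∃ x : Fin m, emb h t x = y := by
  rcases lt_or_gt_of_ne hy with hlt | hgt
  · exact ⟨⟨y, by omega⟩, Fin.ext (by rw [emb_val]; simp [hlt])⟩
  · refine ⟨⟨(y : ℕ) - 1, by omega⟩, Fin.ext ?_⟩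
    rw [emb_val]
    have : ¬ ((y : ℕ) - 1 < t) := by omega
    simp only [this, if_false]
    omega

lemma cnt_map_le {N m : ℕ} (h : m + 1 = N) {t : ℕ} (A : Finset (Fin m)) {j : ℕ}
    (hj : j ≤ t) : cnt (A.map (emb h t)) j = cnt A j := by
  unfold cnt
  rw [Finset.filter_map, Finset.card_map]
  congr 1
  apply Finset.filter_congr
  intro x _
  simp only [Function.comp_apply, emb_val]
  split <;> rename_i hx <;> constructor <;> omega

lemma cnt_map_ge {N m : ℕ} (h : m + 1 = N) {t : ℕ} (A : Finset (Fin m)) {j : ℕ}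
    (hj : t ≤ j) : cnt (A.map (emb h t)) (j + 1) = cnt A j := by
  unfold cnt
  rw [Finset.filter_map, Finset.card_map]
  congr 1
  apply Finset.filter_congr
  intro x _
  simp only [Function.comp_apply, emb_val]
  split <;> rename_i hx <;> constructor <;> omega

/-- the preimage of a finset under `emb` -/
noncomputable def preim {N m : ℕ} (h : m + 1 = N) (t : ℕ) (B : Finset (Fin N)) :
    Finset (Fin m) :=
  Finset.univ.filter fun x : Fin m => emb h t x ∈ B

lemma preim_map {N m : ℕ} (h : m + 1 = N) {t : ℕ} (htm : t ≤ m) {B : Finset (Fin N)}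
    (hq : (⟨t, by omega⟩ : Fin N) ∉ B) : (preim h t B).map (emb h t) = B := by
  ext y
  simp only [Finset.mem_map, preim, Finset.mem_filter, Finset.mem_univ, true_and]
  constructor
  · rintro ⟨x, hx, rfl⟩; exact hx
  · intro hy
    have hyt : (y : ℕ) ≠ t := by
      intro hyt
      exact hq (by rwa [show (⟨t, by omega⟩ : Fin N) = y from Fin.ext hyt.symm])
    obtain ⟨x, hx⟩ := exists_emb_eq h htm y hyt
    exact ⟨x, by rw [hx]; exact hy, hx⟩

lemma map_inter_emb {N m : ℕ} (h : m + 1 = N) (t : ℕ) (A B : Finset (Fin m)) :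
    (A ∩ B).map (emb h t) = A.map (emb h t) ∩ B.map (emb h t) :=
  Finset.map_inter A B


lemma sig_zero (s : List Bool) : sig s 0 = 0 := by simp [sig]

lemma isFreedomBasis_iff (s : List Bool) (B : Finset (Fin s.length)) :
    IsFreedomBasis s B ↔ B.card = s.count true ∧ ∀ j, cnt B j ≤ sig s j := by
  unfold IsFreedomBasis Dominates
  constructor <;> rintro ⟨h1, h2⟩ <;> refine ⟨h1, fun j => ?_⟩
  · rw [← count_take_indList]; exact h2 j
  · rw [count_take_indList]; exact h2 j

lemma indList_ones (s : List Bool) :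
    indList (Finset.univ.filter fun i : Fin s.length => s.get i = true) = s := by
  apply List.ext_get
  · simp [indList]
  · intro n h1 h2
    simp [indList, List.get_ofFn]

lemma exists_freedomBasis (s : List Bool) : ∃ B, IsFreedomBasis s B := by
  refine ⟨Finset.univ.filter fun i : Fin s.length => s.get i = true, ?_, ?_⟩
  · have h1 := count_take_indList
      (Finset.univ.filter fun i : Fin s.length => s.get i = true) s.length
    rw [indList_ones, List.take_of_length_le le_rfl] at h1
    rw [h1, cnt_of_le _ le_rfl]
  · unfold Dominates
    rw [indList_ones]
    intro j; exact le_rfl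

end DCinfra

section Descent

def sBig (u v : List Bool) : List Bool := u ++ [true, false] ++ v
def sDel (u v : List Bool) : List Bool := u ++ [true] ++ v
def sCon (u v : List Bool) : List Bool := u ++ [false] ++ v

variable (u v : List Bool)

lemma len_sBig : (sBig u v).length = u.length + 2 + v.length := by simp [sBig]; omega
lemma len_sDel : (sDel u v).length + 1 = (sBig u v).length := by simp [sDel, sBig]; omega
lemma len_sCon : (sCon u v).length + 1 = (sBig u v).length := by simp [sCon, sBig]; omega
lemma tle_sDel : u.length + 1 ≤ (sDel u v).length := by simp [sDel]
lemma tle_sCon : u.length + 1 ≤ (sCon u v).length := by simp [sCon]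
lemma tlt_sBig : u.length + 1 < (sBig u v).length := by simp [sBig]

def qB : Fin (sBig u v).length := ⟨u.length + 1, tlt_sBig u v⟩

lemma count_sBig : (sBig u v).count true = u.count true + 1 + v.count true := by
  simp [sBig, List.count_append]; omega
lemma count_sDel : (sDel u v).count true = u.count true + 1 + v.count true := by
  simp [sDel, List.count_append]; omega
lemma count_sCon : (sCon u v).count true = u.count true + v.count true := by
  simp [sCon, List.count_append]

lemma sig_sBig_le {j : ℕ} (hj : j ≤ u.length) : sig (sBig u v) j = sig u j := by
  unfold sBig
  rw [sig_append_left (by simp; omega), sig_append_left hj]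

lemma sig_sBig_q : sig (sBig u v) (u.length + 1) = u.count true + 1 := by
  unfold sBig
  rw [sig_append_left (by simp), sig_append_right (by omega)]
  have h1 : u.length + 1 - u.length = 1 := by omega
  rw [h1]
  have h2 : sig [true, false] 1 = 1 := by decide
  rw [h2]

lemma sig_sBig_ge {j : ℕ} (hj : u.length + 2 ≤ j) :
    sig (sBig u v) j = u.count true + 1 + sig v (j - (u.length + 2)) := by
  unfold sBig
  have hlen : (u ++ [true, false]).length = u.length + 2 := by simp
  rw [sig_append_right (by rw [hlen]; omega), hlen]
  have hcnt : (u ++ [true, false]).count true = u.count true + 1 := by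
    simp [List.count_append]
  rw [hcnt]

lemma sig_sDel_le {j : ℕ} (hj : j ≤ u.length) : sig (sDel u v) j = sig u j := by
  unfold sDel
  rw [sig_append_left (by simp; omega), sig_append_left hj]

lemma sig_sDel_ge {j : ℕ} (hj : u.length + 1 ≤ j) :
    sig (sDel u v) j = u.count true + 1 + sig v (j - (u.length + 1)) := by
  unfold sDel
  have hlen : (u ++ [true]).length = u.length + 1 := by simp
  rw [sig_append_right (by rw [hlen]; omega), hlen]
  have hcnt : (u ++ [true]).count true = u.count true + 1 := by
    simp [List.count_append]
  rw [hcnt]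

lemma sig_sCon_le {j : ℕ} (hj : j ≤ u.length) : sig (sCon u v) j = sig u j := by
  unfold sCon
  rw [sig_append_left (by simp; omega), sig_append_left hj]

lemma sig_sCon_ge {j : ℕ} (hj : u.length + 1 ≤ j) :
    sig (sCon u v) j = u.count true + sig v (j - (u.length + 1)) := by
  unfold sCon
  have hlen : (u ++ [false]).length = u.length + 1 := by simp
  rw [sig_append_right (by rw [hlen]; omega), hlen]
  have hcnt : (u ++ [false]).count true = u.count true := by
    simp [List.count_append]
  rw [hcnt]

lemma sig_sDel_eq_le {j : ℕ} (hj : j ≤ u.length + 1) :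
    sig (sDel u v) j = sig (sBig u v) j := by
  rcases Nat.lt_or_ge j (u.length + 1) with h | h
  · rw [sig_sDel_le u v (by omega), sig_sBig_le u v (by omega)]
  · have hj' : j = u.length + 1 := by omega
    subst hj'
    rw [sig_sDel_ge u v le_rfl, sig_sBig_q]
    simp [sig_zero]

lemma sig_sDel_eq_ge {j : ℕ} (hj : u.length + 1 ≤ j) :
    sig (sDel u v) j = sig (sBig u v) (j + 1) := by
  rw [sig_sDel_ge u v hj, sig_sBig_ge u v (by omega)]
  have : j + 1 - (u.length + 2) = j - (u.length + 1) := by omega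
  rw [this]

lemma sig_sCon_eq_le {j : ℕ} (hj : j ≤ u.length) :
    sig (sCon u v) j = sig (sBig u v) j := by
  rw [sig_sCon_le u v hj, sig_sBig_le u v hj]

lemma sig_sCon_le_q {j : ℕ} (hj : j ≤ u.length + 1) :
    sig (sCon u v) j ≤ sig (sBig u v) j := by
  rcases Nat.lt_or_ge j (u.length + 1) with h | h
  · rw [sig_sCon_eq_le u v (by omega)]
  · have hj' : j = u.length + 1 := by omega
    subst hj'
    rw [sig_sCon_ge u v le_rfl, sig_sBig_q]
    simp [sig_zero]

lemma sig_sCon_eq_ge {j : ℕ} (hj : u.length + 1 ≤ j) :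
    sig (sCon u v) j + 1 = sig (sBig u v) (j + 1) := by
  rw [sig_sCon_ge u v hj, sig_sBig_ge u v (by omega)]
  have : j + 1 - (u.length + 2) = j - (u.length + 1) := by omega
  rw [this]
  omega

end Descent

section Descent2

lemma cnt_univ {n : ℕ} (j : ℕ) : cnt (Finset.univ : Finset (Fin n)) j = min j n := by
  rw [← count_take_indList]
  have h : indList (Finset.univ : Finset (Fin n)) = List.replicate n true := by
    unfold indList
    simp
  rw [h, List.take_replicate]
  simp

variable (u v : List Bool)

noncomputable def eD : Fin (sDel u v).length ↪ Fin (sBig u v).length :=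
  emb (len_sDel u v) (u.length + 1)

noncomputable def eC : Fin (sCon u v).length ↪ Fin (sBig u v).length :=
  emb (len_sCon u v) (u.length + 1)

lemma qB_val : ((qB u v : Fin (sBig u v).length) : ℕ) = u.length + 1 := rfl

lemma qB_not_mem_mapD (A : Finset (Fin (sDel u v).length)) : qB u v ∉ A.map (eD u v) :=
  q_not_mem_map (len_sDel u v) (tlt_sBig u v) A

lemma qB_not_mem_mapC (A : Finset (Fin (sCon u v).length)) : qB u v ∉ A.map (eC u v) :=
  q_not_mem_map (len_sCon u v) (tlt_sBig u v) A

lemma basisD_up {B' : Finset (Fin (sDel u v).length)}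
    (hB' : IsFreedomBasis (sDel u v) B') :
    IsFreedomBasis (sBig u v) (B'.map (eD u v)) := by
  rw [isFreedomBasis_iff] at hB' ⊢
  obtain ⟨hcard, hdom⟩ := hB'
  constructor
  · rw [Finset.card_map, hcard, count_sDel, count_sBig]
  · intro j
    rcases le_or_gt j (u.length + 1) with hj | hj
    · rw [eD, cnt_map_le _ _ hj]
      calc cnt B' j ≤ sig (sDel u v) j := hdom j
        _ = sig (sBig u v) j := sig_sDel_eq_le u v hj
    · obtain ⟨j', rfl⟩ : ∃ j', j = j' + 1 := ⟨j - 1, by omega⟩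
      have hj' : u.length + 1 ≤ j' := by omega
      rw [eD, cnt_map_ge _ _ hj']
      calc cnt B' j' ≤ sig (sDel u v) j' := hdom j'
        _ = sig (sBig u v) (j' + 1) := sig_sDel_eq_ge u v hj'

lemma basisD_down {B : Finset (Fin (sBig u v).length)}
    (hB : IsFreedomBasis (sBig u v) B) (hq : qB u v ∉ B) :
    IsFreedomBasis (sDel u v) (preim (len_sDel u v) (u.length + 1) B) ∧
      (preim (len_sDel u v) (u.length + 1) B).map (eD u v) = B := by
  have hmap : (preim (len_sDel u v) (u.length + 1) B).map (eD u v) = B :=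
    preim_map (len_sDel u v) (tle_sDel u v) hq
  refine ⟨?_, hmap⟩
  rw [isFreedomBasis_iff] at hB ⊢
  obtain ⟨hcard, hdom⟩ := hB
  constructor
  · have := Finset.card_map (eD u v) (s := preim (len_sDel u v) (u.length + 1) B)
    rw [hmap] at this
    rw [← this, hcard, count_sDel, count_sBig]
  · intro j
    rcases le_or_gt j (u.length + 1) with hj | hj
    · have h1 : cnt ((preim (len_sDel u v) (u.length + 1) B).map (eD u v)) j
          = cnt (preim (len_sDel u v) (u.length + 1) B) j := cnt_map_le _ _ hj
      rw [hmap] at h1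
      rw [← h1, sig_sDel_eq_le u v hj]
      exact hdom j
    · have hj' : u.length + 1 ≤ j := by omega
      have h1 : cnt ((preim (len_sDel u v) (u.length + 1) B).map (eD u v)) (j + 1)
          = cnt (preim (len_sDel u v) (u.length + 1) B) j := cnt_map_ge _ _ hj'
      rw [hmap] at h1
      rw [← h1, sig_sDel_eq_ge u v hj']
      exact hdom (j + 1)

lemma basis_swap {B : Finset (Fin (sBig u v).length)}
    (hB : IsFreedomBasis (sBig u v) B) (hq : qB u v ∈ B) :
    ∃ i : Fin (sBig u v).length, (i : ℕ) ≤ u.length ∧ i ∉ B ∧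
      IsFreedomBasis (sBig u v) (insert i (B.erase (qB u v))) := by
  rw [isFreedomBasis_iff] at hB
  obtain ⟨hcard, hdom⟩ := hB
  have hN : (sBig u v).length = u.length + 2 + v.length := len_sBig u v
  have hcu : u.count true ≤ u.length := List.count_le_length
  have hsigq2 : sig (sBig u v) (u.length + 2) = u.count true + 1 := by
    rw [sig_sBig_ge u v le_rfl]
    simp [sig_zero]
  set T := Finset.univ.filter
    (fun i : Fin (sBig u v).length => (i : ℕ) ≤ u.length ∧ i ∉ B) with hT
  have hTne : T.Nonempty := by
    by_contra hTe
    rw [Finset.not_nonempty_iff_eq_empty] at hTe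
    have hall : ∀ x : Fin (sBig u v).length, (x : ℕ) ≤ u.length → x ∈ B := by
      intro x hx
      by_contra hxB
      have : x ∈ T := Finset.mem_filter.mpr ⟨Finset.mem_univ x, hx, hxB⟩
      rw [hTe] at this
      exact absurd this (Finset.notMem_empty x)
    have hsub : (Finset.univ.filter fun i : Fin (sBig u v).length => (i : ℕ) < u.length + 2)
        ⊆ B.filter (fun i : Fin (sBig u v).length => (i : ℕ) < u.length + 2) := by
      intro x hx
      rw [Finset.mem_filter] at hx ⊢
      refine ⟨?_, hx.2⟩
      rcases le_or_gt (x : ℕ) u.length with h | h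
      · exact hall x h
      · have : (x : ℕ) = u.length + 1 := by omega
        have : x = qB u v := Fin.ext this
        rw [this]; exact hq
    have h1 : cnt (Finset.univ : Finset (Fin (sBig u v).length)) (u.length + 2)
        ≤ cnt B (u.length + 2) := Finset.card_le_card hsub
    rw [cnt_univ] at h1
    have h2 := hdom (u.length + 2)
    rw [hsigq2] at h2
    omega
  set i := T.max' hTne with hi
  have hiT : i ∈ T := T.max'_mem hTne
  rw [Finset.mem_filter] at hiT
  obtain ⟨-, hiL, hiB⟩ := hiT
  have hmax : ∀ x : Fin (sBig u v).length, (i : ℕ) < (x : ℕ) → (x : ℕ) ≤ u.length → x ∈ B := by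
    intro x h1 h2
    by_contra hx
    have hxT : x ∈ T := Finset.mem_filter.mpr ⟨Finset.mem_univ x, h2, hx⟩
    have := T.le_max' x hxT
    rw [← hi] at this
    rw [Fin.le_def] at this
    omega
  have hqe : i ∉ B.erase (qB u v) := fun h => hiB (Finset.mem_of_mem_erase h)
  refine ⟨i, hiL, hiB, ?_⟩
  rw [isFreedomBasis_iff]
  constructor
  · rw [Finset.card_insert_of_notMem hqe, Finset.card_erase_of_mem hq]
    have : 1 ≤ B.card := Finset.card_pos.mpr ⟨_, hq⟩
    omega
  · intro j
    have e1 : cnt (insert i (B.erase (qB u v))) j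
        = cnt (B.erase (qB u v)) j + if (i : ℕ) < j then 1 else 0 := cnt_insert hqe j
    have e2 : cnt B j = cnt (B.erase (qB u v)) j
        + if ((qB u v : Fin (sBig u v).length) : ℕ) < j then 1 else 0 := cnt_erase hq j
    rw [qB_val] at e2
    have hd := hdom j
    by_cases h1 : (i : ℕ) < j
    · rw [if_pos h1] at e1
      by_cases h2 : u.length + 1 < j
      · rw [if_pos h2] at e2
        omega
      · rw [if_neg h2] at e2
        -- key case : i < j ≤ u.length + 1
        have hjL : j ≤ u.length + 1 := by omega
        -- the elements from j to u.length+1 are all in B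
        set W := Finset.univ.filter
          (fun x : Fin (sBig u v).length => j ≤ (x : ℕ) ∧ (x : ℕ) < u.length + 2) with hW
        have hWB : W ⊆ B.filter (fun x : Fin (sBig u v).length => (x : ℕ) < u.length + 2) := by
          intro x hx
          rw [Finset.mem_filter] at hx ⊢
          obtain ⟨-, hx1, hx2⟩ := hx
          refine ⟨?_, hx2⟩
          rcases le_or_gt (x : ℕ) u.length with h | h
          · exact hmax x (by omega) h
          · have : (x : ℕ) = u.length + 1 := by omega
            have : x = qB u v := Fin.ext this
            rw [this]; exact hq
        have hdisj : Disjoint (B.filter (fun x : Fin (sBig u v).length => (x : ℕ) < j)) W := by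
          rw [Finset.disjoint_left]
          intro x hx hxW
          rw [Finset.mem_filter] at hx hxW
          omega
        have hsub2 : (B.filter (fun x : Fin (sBig u v).length => (x : ℕ) < j)) ∪ W
            ⊆ B.filter (fun x : Fin (sBig u v).length => (x : ℕ) < u.length + 2) := by
          apply Finset.union_subset _ hWB
          intro x hx
          rw [Finset.mem_filter] at hx ⊢
          exact ⟨hx.1, by omega⟩
        have hWcard : W.card = u.length + 2 - j := by
          have hWs : W = (Finset.univ.filter
                (fun x : Fin (sBig u v).length => (x : ℕ) < u.length + 2))
              \ (Finset.univ.filter (fun x : Fin (sBig u v).length => (x : ℕ) < j)) := by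
            ext x
            simp only [hW, Finset.mem_filter, Finset.mem_sdiff, Finset.mem_univ, true_and]
            omega
          rw [hWs, Finset.card_sdiff_of_subset (by
            intro x hx
            rw [Finset.mem_filter] at hx ⊢
            exact ⟨hx.1, by omega⟩)]
          have c1 : (Finset.univ.filter
              (fun x : Fin (sBig u v).length => (x : ℕ) < u.length + 2)).card
              = min (u.length + 2) (sBig u v).length := cnt_univ _
          have c2 : (Finset.univ.filter
              (fun x : Fin (sBig u v).length => (x : ℕ) < j)).card
              = min j (sBig u v).length := cnt_univ _
          rw [c1, c2]
          omega
        have hkey : cnt B j + (u.length + 2 - j) ≤ cnt B (u.length + 2) := by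
          have := Finset.card_le_card hsub2
          rw [Finset.card_union_of_disjoint hdisj, hWcard] at this
          exact this
        have hd2 := hdom (u.length + 2)
        rw [hsigq2] at hd2
        rcases le_or_gt j u.length with hjL2 | hjL2
        · -- j ≤ u.length : sig sBig j = sig u j
          rw [sig_sBig_le u v hjL2]
          have hadd : u.count true ≤ sig u j + (u.length - j) := by
            have := sig_le_add u hjL2
            rw [sig_length] at this
            exact this
          omega
        · have : j = u.length + 1 := by omega
          subst this
          rw [sig_sBig_q]
          omega
    · rw [if_neg h1] at e1
      by_cases h2 : u.length + 1 < j
      · rw [if_pos h2] at e2; omega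
      · rw [if_neg h2] at e2; omega

end Descent2

section Descent3

variable (u v : List Bool)

lemma basisC_up {B'' : Finset (Fin (sCon u v).length)}
    (h : IsFreedomBasis (sCon u v) B'') :
    IsFreedomBasis (sBig u v) (insert (qB u v) (B''.map (eC u v))) := by
  rw [isFreedomBasis_iff] at h ⊢
  obtain ⟨hcard, hdom⟩ := h
  have hqm := qB_not_mem_mapC u v B''
  constructor
  · rw [Finset.card_insert_of_notMem hqm, Finset.card_map, hcard, count_sCon, count_sBig]
    omega
  · intro j
    have e1 : cnt (insert (qB u v) (B''.map (eC u v))) j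
        = cnt (B''.map (eC u v)) j + if u.length + 1 < j then 1 else 0 := by
      have := cnt_insert hqm j
      rwa [qB_val] at this
    rcases le_or_gt j (u.length + 1) with hj | hj
    · rw [e1, if_neg (by omega)]
      have h2 : cnt (B''.map (eC u v)) j = cnt B'' j := cnt_map_le _ _ hj
      rw [h2]
      calc cnt B'' j ≤ sig (sCon u v) j := hdom j
        _ ≤ sig (sBig u v) j := sig_sCon_le_q u v hj
    · obtain ⟨j', rfl⟩ : ∃ j'', j = j'' + 1 := ⟨j - 1, by omega⟩
      have hj' : u.length + 1 ≤ j' := by omega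
      rw [e1, if_pos (by omega)]
      have h2 : cnt (B''.map (eC u v)) (j' + 1) = cnt B'' j' := cnt_map_ge _ _ hj'
      rw [h2]
      have h3 := hdom j'
      have h4 := sig_sCon_eq_ge u v hj'
      omega

lemma basisC_down_mem {B : Finset (Fin (sBig u v).length)}
    (hB : IsFreedomBasis (sBig u v) B) (hq : qB u v ∈ B) :
    IsFreedomBasis (sCon u v) (preim (len_sCon u v) (u.length + 1) (B.erase (qB u v))) ∧
      (preim (len_sCon u v) (u.length + 1) (B.erase (qB u v))).map (eC u v)
        = B.erase (qB u v) := by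
  have hqB : qB u v ∉ B.erase (qB u v) := Finset.notMem_erase _ _
  have hmap : (preim (len_sCon u v) (u.length + 1) (B.erase (qB u v))).map (eC u v)
      = B.erase (qB u v) := preim_map (len_sCon u v) (tle_sCon u v) hqB
  refine ⟨?_, hmap⟩
  rw [isFreedomBasis_iff] at hB ⊢
  obtain ⟨hcard, hdom⟩ := hB
  have hcm := Finset.card_map (f := eC u v)
    (s := preim (len_sCon u v) (u.length + 1) (B.erase (qB u v)))
  rw [hmap] at hcm
  have hBpos : 1 ≤ B.card := Finset.card_pos.mpr ⟨_, hq⟩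
  constructor
  · rw [← hcm, Finset.card_erase_of_mem hq, hcard, count_sBig, count_sCon]
    omega
  · intro j'
    have e2 : ∀ k, cnt B k = cnt (B.erase (qB u v)) k
        + if u.length + 1 < k then 1 else 0 := by
      intro k
      have := cnt_erase hq k
      rwa [qB_val] at this
    rcases le_or_gt j' u.length with hj | hj
    · have h1 : cnt ((preim (len_sCon u v) (u.length + 1) (B.erase (qB u v))).map (eC u v)) j'
          = cnt (preim (len_sCon u v) (u.length + 1) (B.erase (qB u v))) j' :=
        cnt_map_le _ _ (by omega)
      rw [hmap] at h1
      rw [← h1, sig_sCon_eq_le u v hj]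
      have h2 := e2 j'
      have h3 := hdom j'
      omega
    · have hj' : u.length + 1 ≤ j' := by omega
      have h1 : cnt ((preim (len_sCon u v) (u.length + 1) (B.erase (qB u v))).map (eC u v))
          (j' + 1) = cnt (preim (len_sCon u v) (u.length + 1) (B.erase (qB u v))) j' :=
        cnt_map_ge _ _ hj'
      rw [hmap] at h1
      rw [← h1]
      have h2 := e2 (j' + 1)
      rw [if_pos (by omega)] at h2
      have h3 := hdom (j' + 1)
      have h4 := sig_sCon_eq_ge u v hj'
      omega

lemma basisC_down_notmem {B : Finset (Fin (sBig u v).length)}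
    (hB : IsFreedomBasis (sBig u v) B) (hq : qB u v ∉ B) :
    ∃ x ∈ B, IsFreedomBasis (sCon u v) (preim (len_sCon u v) (u.length + 1) (B.erase x)) ∧
      (preim (len_sCon u v) (u.length + 1) (B.erase x)).map (eC u v) = B.erase x := by
  rw [isFreedomBasis_iff] at hB
  obtain ⟨hcard, hdom⟩ := hB
  have hN : (sBig u v).length = u.length + 2 + v.length := len_sBig u v
  set J := (Finset.range ((sBig u v).length + 1)).filter
    (fun j => u.length + 1 ≤ j ∧ sig (sBig u v) j ≤ cnt B j) with hJ
  have hNJ : (sBig u v).length ∈ J := by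
    rw [hJ, Finset.mem_filter, Finset.mem_range]
    refine ⟨by omega, by omega, ?_⟩
    rw [sig_length, ← hcard, cnt_of_le B le_rfl]
  have hJne : J.Nonempty := ⟨_, hNJ⟩
  set j0 := J.min' hJne with hj0
  have hj0J : j0 ∈ J := J.min'_mem hJne
  rw [hJ, Finset.mem_filter, Finset.mem_range] at hj0J
  obtain ⟨hj0N, hj0a, hj0b⟩ := hj0J
  have hmin : ∀ k, k < (sBig u v).length + 1 → u.length + 1 ≤ k →
      sig (sBig u v) k ≤ cnt B k → j0 ≤ k := by
    intro k h1 h2 h3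
    exact J.min'_le k (by rw [hJ, Finset.mem_filter, Finset.mem_range]; exact ⟨h1, h2, h3⟩)
  have hx1 : 0 < cnt B j0 := by
    have := sig_mono (sBig u v) hj0a
    rw [sig_sBig_q] at this
    omega
  obtain ⟨x, hxmem⟩ := Finset.card_pos.mp hx1
  rw [Finset.mem_filter] at hxmem
  obtain ⟨hxB, hxj0⟩ := hxmem
  have hqBe : qB u v ∉ B.erase x := fun h => hq (Finset.mem_of_mem_erase h)
  have hmap : (preim (len_sCon u v) (u.length + 1) (B.erase x)).map (eC u v) = B.erase x :=
    preim_map (len_sCon u v) (tle_sCon u v) hqBe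
  have hcm := Finset.card_map (f := eC u v)
    (s := preim (len_sCon u v) (u.length + 1) (B.erase x))
  rw [hmap] at hcm
  have hcardP : (preim (len_sCon u v) (u.length + 1) (B.erase x)).card
      = (sCon u v).count true := by
    rw [← hcm, Finset.card_erase_of_mem hxB, hcard, count_sBig, count_sCon]
    omega
  refine ⟨x, hxB, ?_, hmap⟩
  rw [isFreedomBasis_iff]
  refine ⟨hcardP, ?_⟩
  intro j'
  rcases le_or_gt j' u.length with hj | hj
  · have h1 : cnt ((preim (len_sCon u v) (u.length + 1) (B.erase x)).map (eC u v)) j'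
        = cnt (preim (len_sCon u v) (u.length + 1) (B.erase x)) j' :=
      cnt_map_le _ _ (by omega)
    rw [hmap] at h1
    rw [← h1, sig_sCon_eq_le u v hj]
    have h2 : cnt (B.erase x) j' ≤ cnt B j' := cnt_le_of_subset (Finset.erase_subset _ _) _
    have h3 := hdom j'
    omega
  · rcases le_or_gt ((sCon u v).length) j' with hbig | hsml
    · have hc1 : cnt (preim (len_sCon u v) (u.length + 1) (B.erase x)) j'
          = (preim (len_sCon u v) (u.length + 1) (B.erase x)).card := cnt_of_le _ hbig
      have hc2 : sig (sCon u v) j' = (sCon u v).count true := sig_of_le hbig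
      rw [hc1, hc2, hcardP]
    · have hj' : u.length + 1 ≤ j' := by omega
      have hj'1 : j' + 1 < (sBig u v).length + 1 := by
        have := len_sCon u v
        omega
      have h1 : cnt ((preim (len_sCon u v) (u.length + 1) (B.erase x)).map (eC u v)) (j' + 1)
          = cnt (preim (len_sCon u v) (u.length + 1) (B.erase x)) j' :=
        cnt_map_ge _ _ hj'
      rw [hmap] at h1
      rw [← h1]
      have hd := hdom (j' + 1)
      have hscon := sig_sCon_eq_ge u v hj'
      have herase : cnt B (j' + 1) = cnt (B.erase x) (j' + 1)
          + if (x : ℕ) < j' + 1 then 1 else 0 := cnt_erase hxB _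
      by_cases htight : sig (sBig u v) (j' + 1) ≤ cnt B (j' + 1)
      · have hmin2 : j0 ≤ j' + 1 := hmin (j' + 1) hj'1 (by omega) htight
        rw [if_pos (by omega)] at herase
        omega
      · have h2 : cnt (B.erase x) (j' + 1) ≤ cnt B (j' + 1) :=
          cnt_le_of_subset (Finset.erase_subset _ _) _
        omega

end Descent3

section Descent4

variable (u v : List Bool)

lemma rk_del (A' : Finset (Fin (sDel u v).length)) :
    freedomRk (sBig u v) (A'.map (eD u v)) = freedomRk (sDel u v) A' := by
  unfold freedomRk
  apply le_antisymm
  · apply Finset.sup_le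
    intro B hBf
    rw [Finset.mem_filter] at hBf
    have hB := hBf.2
    by_cases hq : qB u v ∈ B
    · obtain ⟨i, hiL, hiB, hbasis⟩ := basis_swap u v hB hq
      have hq2 : qB u v ∉ insert i (B.erase (qB u v)) := by
        rw [Finset.mem_insert]
        rintro (h | h)
        · have := congrArg Fin.val h
          rw [qB_val] at this
          omega
        · exact Finset.notMem_erase _ _ h
      obtain ⟨hP, hPmap⟩ := basisD_down u v hbasis hq2
      have hsub : A'.map (eD u v) ∩ B
          ⊆ A'.map (eD u v) ∩ insert i (B.erase (qB u v)) := by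
        intro y hy
        rw [Finset.mem_inter] at hy ⊢
        refine ⟨hy.1, ?_⟩
        have hyq : y ≠ qB u v := by
          rintro rfl
          exact qB_not_mem_mapD u v A' hy.1
        exact Finset.mem_insert_of_mem (Finset.mem_erase.mpr ⟨hyq, hy.2⟩)
      have hinter : A'.map (eD u v) ∩ insert i (B.erase (qB u v))
          = (A' ∩ preim (len_sDel u v) (u.length + 1) (insert i (B.erase (qB u v)))).map
              (eD u v) := by
        rw [Finset.map_inter, hPmap]
      calc (A'.map (eD u v) ∩ B).card
          ≤ (A'.map (eD u v) ∩ insert i (B.erase (qB u v))).card := Finset.card_le_card hsub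
        _ = (A' ∩ preim (len_sDel u v) (u.length + 1) (insert i (B.erase (qB u v)))).card := by
            rw [hinter, Finset.card_map]
        _ ≤ _ := Finset.le_sup (f := fun B' => (A' ∩ B').card)
            (Finset.mem_filter.mpr ⟨Finset.mem_univ _, hP⟩)
    · obtain ⟨hP, hPmap⟩ := basisD_down u v hB hq
      have hinter : A'.map (eD u v) ∩ B
          = (A' ∩ preim (len_sDel u v) (u.length + 1) B).map (eD u v) := by
        rw [Finset.map_inter, hPmap]
      rw [hinter, Finset.card_map]
      exact Finset.le_sup (f := fun B' => (A' ∩ B').card)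
        (Finset.mem_filter.mpr ⟨Finset.mem_univ _, hP⟩)
  · apply Finset.sup_le
    intro B' hB'f
    rw [Finset.mem_filter] at hB'f
    have hmapB := basisD_up u v hB'f.2
    have hinter : (A' ∩ B').card = (A'.map (eD u v) ∩ B'.map (eD u v)).card := by
      rw [← Finset.map_inter, Finset.card_map]
    rw [hinter]
    exact Finset.le_sup (f := fun B => (A'.map (eD u v) ∩ B).card)
      (Finset.mem_filter.mpr ⟨Finset.mem_univ _, hmapB⟩)

lemma rk_con (A' : Finset (Fin (sCon u v).length)) :
    freedomRk (sBig u v) (insert (qB u v) (A'.map (eC u v)))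
      = freedomRk (sCon u v) A' + 1 := by
  unfold freedomRk
  apply le_antisymm
  · apply Finset.sup_le
    intro B hBf
    rw [Finset.mem_filter] at hBf
    have hB := hBf.2
    have hqA : qB u v ∉ A'.map (eC u v) := qB_not_mem_mapC u v A'
    by_cases hq : qB u v ∈ B
    · obtain ⟨hP, hPmap⟩ := basisC_down_mem u v hB hq
      have hAB : insert (qB u v) (A'.map (eC u v)) ∩ B
          = insert (qB u v) (A'.map (eC u v) ∩ B.erase (qB u v)) := by
        ext y
        simp only [Finset.mem_inter, Finset.mem_insert, Finset.mem_erase]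
        constructor
        · rintro ⟨(rfl | hyA), hyB⟩
          · exact Or.inl rfl
          · exact Or.inr ⟨hyA, fun h => hqA (h ▸ hyA), hyB⟩
        · rintro (rfl | ⟨hyA, hne, hyB⟩)
          · exact ⟨Or.inl rfl, hq⟩
          · exact ⟨Or.inr hyA, hyB⟩
      have hqint : qB u v ∉ A'.map (eC u v) ∩ B.erase (qB u v) := by
        rw [Finset.mem_inter]
        rintro ⟨h, -⟩
        exact hqA h
      rw [hAB, Finset.card_insert_of_notMem hqint]
      have hinter : A'.map (eC u v) ∩ B.erase (qB u v)
          = (A' ∩ preim (len_sCon u v) (u.length + 1) (B.erase (qB u v))).map (eC u v) := by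
        rw [Finset.map_inter, hPmap]
      rw [hinter, Finset.card_map]
      have hle : (A' ∩ preim (len_sCon u v) (u.length + 1) (B.erase (qB u v))).card
          ≤ (Finset.univ.filter fun B'' => IsFreedomBasis (sCon u v) B'').sup
            (fun B'' => (A' ∩ B'').card) :=
        Finset.le_sup (f := fun B'' => (A' ∩ B'').card)
          (Finset.mem_filter.mpr ⟨Finset.mem_univ _, hP⟩)
      omega
    · obtain ⟨x, hxB, hP, hPmap⟩ := basisC_down_notmem u v hB hq
      have hsub : insert (qB u v) (A'.map (eC u v)) ∩ B
          ⊆ insert x ((A' ∩ preim (len_sCon u v) (u.length + 1) (B.erase x)).map (eC u v)) := by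
        intro y hy
        rw [Finset.mem_inter] at hy
        obtain ⟨hy1, hy2⟩ := hy
        rw [Finset.mem_insert] at hy1 ⊢
        rcases hy1 with rfl | hyA
        · exact absurd hy2 hq
        · by_cases hyx : y = x
          · exact Or.inl hyx
          · right
            rw [Finset.map_inter, hPmap, Finset.mem_inter]
            exact ⟨hyA, Finset.mem_erase.mpr ⟨hyx, hy2⟩⟩
      have hc := Finset.card_le_card hsub
      have hc2 : (insert x ((A' ∩ preim (len_sCon u v) (u.length + 1) (B.erase x)).map
            (eC u v))).card
          ≤ (A' ∩ preim (len_sCon u v) (u.length + 1) (B.erase x)).card + 1 := by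
        refine le_trans (Finset.card_insert_le _ _) ?_
        rw [Finset.card_map]
      have hle : (A' ∩ preim (len_sCon u v) (u.length + 1) (B.erase x)).card
          ≤ (Finset.univ.filter fun B'' => IsFreedomBasis (sCon u v) B'').sup
            (fun B'' => (A' ∩ B'').card) :=
        Finset.le_sup (f := fun B'' => (A' ∩ B'').card)
          (Finset.mem_filter.mpr ⟨Finset.mem_univ _, hP⟩)
      omega
  · have hne : (Finset.univ.filter fun B'' : Finset (Fin (sCon u v).length) =>
        IsFreedomBasis (sCon u v) B'').Nonempty := by
      obtain ⟨B'', hB''⟩ := exists_freedomBasis (sCon u v)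
      exact ⟨B'', Finset.mem_filter.mpr ⟨Finset.mem_univ _, hB''⟩⟩
    obtain ⟨B'', hB''mem, hB''eq⟩ :=
      Finset.exists_mem_eq_sup _ hne (fun B'' => (A' ∩ B'').card)
    rw [hB''eq]
    rw [Finset.mem_filter] at hB''mem
    have hup := basisC_up u v hB''mem.2
    have hqAB : qB u v ∉ (A' ∩ B'').map (eC u v) := qB_not_mem_mapC u v _
    have hinter : insert (qB u v) (A'.map (eC u v)) ∩ insert (qB u v) (B''.map (eC u v))
        = insert (qB u v) ((A' ∩ B'').map (eC u v)) := by
      rw [Finset.map_inter, Finset.insert_inter_distrib]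
    have hcard : (insert (qB u v) (A'.map (eC u v)) ∩ insert (qB u v)
          (B''.map (eC u v))).card = (A' ∩ B'').card + 1 := by
      rw [hinter, Finset.card_insert_of_notMem hqAB, Finset.card_map]
    calc (A' ∩ B'').card + 1 = _ := hcard.symm
      _ ≤ _ := Finset.le_sup (f := fun B => (insert (qB u v) (A'.map (eC u v)) ∩ B).card)
          (Finset.mem_filter.mpr ⟨Finset.mem_univ _, hup⟩)

end Descent4

/-- Deletion–contraction at a descent: if `u10v` is an `(n,r)`-sequence then
`T(F(u10v)) = T(F(u1v)) + T(F(u0v))`. -/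
theorem freedomTutte_descent (K : Type*) [Field K] (n r : ℕ) (u v : List Bool)
    (hn : (u ++ [true, false] ++ v).length = n)
    (hr : (u ++ [true, false] ++ v).count true = r) :
    freedomTutte K (u ++ [true, false] ++ v) =
      freedomTutte K (u ++ [true] ++ v) + freedomTutte K (u ++ [false] ++ v) := by
  show freedomTutte K (sBig u v) = freedomTutte K (sDel u v) + freedomTutte K (sCon u v)
  unfold freedomTutte tutte
  have hcountD : (sBig u v).count true = (sDel u v).count true := by
    rw [count_sBig, count_sDel]
  have hcountC : (sBig u v).count true = (sCon u v).count true + 1 := by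
    rw [count_sBig, count_sCon]; omega
  have hdel : ∑ A' : Finset (Fin (sDel u v).length),
      (X 0 - 1 : MvPolynomial (Fin 2) K) ^ ((sDel u v).count true - freedomRk (sDel u v) A')
        * (X 1 - 1) ^ (A'.card - freedomRk (sDel u v) A')
      = ∑ A ∈ Finset.univ.filter (fun A : Finset (Fin (sBig u v).length) => qB u v ∉ A),
      (X 0 - 1) ^ ((sBig u v).count true - freedomRk (sBig u v) A)
        * (X 1 - 1) ^ (A.card - freedomRk (sBig u v) A) := by
    apply Finset.sum_bij (i := fun (A' : Finset (Fin (sDel u v).length)) _ => A'.map (eD u v))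
    · intro A' _
      exact Finset.mem_filter.mpr ⟨Finset.mem_univ _, qB_not_mem_mapD u v A'⟩
    · intro a1 _ a2 _ h
      exact Finset.map_injective _ h
    · intro A hA
      rw [Finset.mem_filter] at hA
      refine ⟨preim (len_sDel u v) (u.length + 1) A, Finset.mem_univ _, ?_⟩
      have hm : (preim (len_sDel u v) (u.length + 1) A).map (eD u v) = A :=
        preim_map (len_sDel u v) (tle_sDel u v) hA.2
      exact hm
    · intro A' _
      rw [rk_del u v A', Finset.card_map, hcountD]
  have hcon : ∑ A' : Finset (Fin (sCon u v).length),
      (X 0 - 1 : MvPolynomial (Fin 2) K) ^ ((sCon u v).count true - freedomRk (sCon u v) A')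
        * (X 1 - 1) ^ (A'.card - freedomRk (sCon u v) A')
      = ∑ A ∈ Finset.univ.filter (fun A : Finset (Fin (sBig u v).length) => ¬ qB u v ∉ A),
      (X 0 - 1) ^ ((sBig u v).count true - freedomRk (sBig u v) A)
        * (X 1 - 1) ^ (A.card - freedomRk (sBig u v) A) := by
    apply Finset.sum_bij
      (i := fun (A' : Finset (Fin (sCon u v).length)) _ => insert (qB u v) (A'.map (eC u v)))
    · intro A' _
      exact Finset.mem_filter.mpr ⟨Finset.mem_univ _,
        not_not_intro (Finset.mem_insert_self _ _)⟩
    · intro a1 _ a2 _ h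
      have h2 := congrArg (fun S => Finset.erase S (qB u v)) h
      rw [Finset.erase_insert (qB_not_mem_mapC u v a1),
        Finset.erase_insert (qB_not_mem_mapC u v a2)] at h2
      exact Finset.map_injective _ h2
    · intro A hA
      rw [Finset.mem_filter, not_not] at hA
      refine ⟨preim (len_sCon u v) (u.length + 1) (A.erase (qB u v)), Finset.mem_univ _, ?_⟩
      have hm : (preim (len_sCon u v) (u.length + 1) (A.erase (qB u v))).map (eC u v)
          = A.erase (qB u v) :=
        preim_map (len_sCon u v) (tle_sCon u v) (Finset.notMem_erase _ _)
      rw [hm, Finset.insert_erase hA.2]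
    · intro A' _
      have hrk := rk_con u v A'
      have hcardi : (insert (qB u v) (A'.map (eC u v))).card = A'.card + 1 := by
        rw [Finset.card_insert_of_notMem (qB_not_mem_mapC u v A'), Finset.card_map]
      rw [hrk, hcardi]
      have e1 : (sBig u v).count true - (freedomRk (sCon u v) A' + 1)
          = (sCon u v).count true - freedomRk (sCon u v) A' := by omega
      have e2 : A'.card + 1 - (freedomRk (sCon u v) A' + 1)
          = A'.card - freedomRk (sCon u v) A' := by omega
      rw [e1, e2]
  rw [hdel, hcon]
  exact (Finset.sum_filter_add_sum_filter_not Finset.univ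
    (fun A : Finset (Fin (sBig u v).length) => qB u v ∉ A) _).symm
end
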